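/- arXiv:1901.07668 — 4 statements merged into one kernel-verified Lean document; each statement's English description precedes it below -/
import Mathlib

section
/- Every polyhedral cone C is the Minkowski sum of its minimal face F₀ (a vector subspace) and a pointed polyhedral cone C' contained in the orthogonal complement of F₀; consequently C* = F₀^⊥ ∩ (C')*. -/
open scoped RealInnerProductSpace
open scoped Classical
open scoped Pointwise

noncomputable section

variable {V : Type*} [NormedAddCommGroup V] [InnerProductSpace ℝ V] [FiniteDimensional ℝ V]

/-- A polyhedral cone: a finite intersection of closed halfspaces through the origin. -/
def IsPolyCone (C : Set V) : Prop :=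
  ∃ s : Finset V, C = ⋂ y ∈ s, {v : V | 0 ≤ ⟪v, y⟫}

/-- `F` is a face of the cone `C`: `F = C ∩ H_y` for some `y` (possibly `0`) with `C ⊆ H_y⁺`. -/
def IsFaceOf (F C : Set V) : Prop :=
  ∃ y : V, C ⊆ {v : V | 0 ≤ ⟪v, y⟫} ∧ F = C ∩ {v : V | ⟪v, y⟫ = 0}

/-- Dimension of a set: the dimension of its linear span. -/
def sdim (S : Set V) : ℕ := Module.finrank ℝ (Submodule.span ℝ S)

/-- Dual cone. -/
def dualCone (C : Set V) : Set V := {v : V | ∀ c ∈ C, 0 ≤ ⟪v, c⟫}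

/-- Angle cone `A(F, C) = { a • (x - z) : a > 0, x ∈ C, z ∈ relint F }`. -/
def angleCone (F C : Set V) : Set V :=
  {w : V | ∃ a : ℝ, 0 < a ∧ ∃ x ∈ C, ∃ z ∈ intrinsicInterior ℝ F, w = a • (x - z)}

/-- Real-valued indicator function of a set. -/
def ind (S : Set V) : V → ℝ := S.indicator 1

/-- The `Γ` function: `Γ(C, x, y) = Σ_{F face of C} (-1)^(dim F) [A(F,C)](x) [F*](y)`. -/
def Γ (C : Set V) (x y : V) : ℝ :=
  ∑ᶠ F ∈ {F : Set V | IsFaceOf F C},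
    (-1 : ℝ) ^ sdim F * ind (angleCone F C) x * ind (dualCone F) y

/-- `F₀` is the minimal face of `C`. -/
def IsMinimalFace (F₀ C : Set V) : Prop :=
  IsFaceOf F₀ C ∧ ∀ F : Set V, IsFaceOf F C → F₀ ⊆ F

/-- A polyhedron: a finite intersection of translates of halfspaces. -/
def IsPolyhedron (P : Set V) : Prop :=
  ∃ s : Finset (V × ℝ), P = ⋂ p ∈ s, {v : V | p.2 ≤ ⟪v, p.1⟫}

lemma mem_orth_span_iff (t : Set V) (v : V) :
    v ∈ (Submodule.span ℝ t)ᗮ ↔ ∀ y ∈ t, ⟪v, y⟫ = 0 := by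
  rw [Submodule.mem_orthogonal']
  constructor
  · exact fun h y hy => h y (Submodule.subset_span hy)
  · intro h u hu
    induction hu using Submodule.span_induction with
    | mem x hx => exact h x hx
    | zero => simp
    | add x y _ _ hx hy => rw [inner_add_right, hx, hy, add_zero]
    | smul a x _ hx => rw [real_inner_smul_right, hx, mul_zero]

/-- In a cone cut out by `s`, the lineality-type characterization of the minimal face:
if all inner products with members of `s` are nonneg and the sum is zero, each is zero. -/
lemma sum_inner_zero_iff (s : Finset V) (v : V) (hv : ∀ y ∈ s, 0 ≤ ⟪v, y⟫) :
    ⟪v, ∑ y ∈ s, y⟫ = 0 ↔ ∀ y ∈ s, ⟪v, y⟫ = 0 := by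
  rw [inner_sum]
  exact Finset.sum_eq_zero_iff_of_nonneg hv

theorem stmt5 (C F₀ : Set V) (hC : IsPolyCone C) (h₀ : IsMinimalFace F₀ C) :
    (∃ W : Submodule ℝ V, (W : Set V) = F₀) ∧
    ∃ C' : Set V, IsPolyCone C' ∧ IsMinimalFace {(0 : V)} C' ∧
      C' ⊆ {v : V | ∀ w ∈ F₀, ⟪v, w⟫ = 0} ∧
      C = F₀ + C' ∧
      dualCone C = {v : V | ∀ w ∈ F₀, ⟪v, w⟫ = 0} ∩ dualCone C' := by
  obtain ⟨s, rfl⟩ := hC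
  set C : Set V := ⋂ y ∈ s, {v : V | 0 ≤ ⟪v, y⟫} with hCdef
  have hCmem : ∀ v : V, v ∈ C ↔ ∀ y ∈ s, 0 ≤ ⟪v, y⟫ := by
    intro v; simp [hCdef]
  set S : Submodule ℝ V := Submodule.span ℝ (↑s : Set V) with hSdef
  have hSperp : ∀ v : V, v ∈ Sᗮ ↔ ∀ y ∈ s, ⟪v, y⟫ = 0 := fun v =>
    mem_orth_span_iff (↑s : Set V) v
  -- Sᗮ ⊆ C
  have hWC : (Sᗮ : Set V) ⊆ C := by
    intro v hv
    rw [hCmem]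
    intro y hy
    rw [(hSperp v).mp hv y hy]
  -- Sᗮ is a face of C
  have hWface : IsFaceOf (Sᗮ : Set V) C := by
    refine ⟨∑ y ∈ s, y, ?_, ?_⟩
    · intro v hv
      rw [hCmem] at hv
      simp only [Set.mem_setOf_eq, inner_sum]
      exact Finset.sum_nonneg hv
    · ext v
      simp only [Set.mem_inter_iff, Set.mem_setOf_eq, SetLike.mem_coe, hSperp, hCmem]
      constructor
      · intro h
        refine ⟨fun y hy => le_of_eq (h y hy).symm, ?_⟩
        rw [sum_inner_zero_iff s v (fun y hy => le_of_eq (h y hy).symm)]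
        exact h
      · rintro ⟨h1, h2⟩
        exact (sum_inner_zero_iff s v h1).mp h2
  -- F₀ = Sᗮ
  have hF₀ : F₀ = (Sᗮ : Set V) := by
    apply Set.Subset.antisymm (h₀.2 _ hWface)
    obtain ⟨y, hCy, hFy⟩ := h₀.1
    intro v hv
    have hvC : v ∈ C := hWC hv
    have hnvC : -v ∈ C := hWC (by simpa using Submodule.neg_mem _ hv)
    have h1 : 0 ≤ ⟪v, y⟫ := hCy hvC
    have h2 : 0 ≤ ⟪-v, y⟫ := hCy hnvC
    rw [inner_neg_left, neg_nonneg] at h2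
    rw [hFy]
    exact ⟨hvC, le_antisymm h2 h1⟩
  -- the spanning finset of Sᗮ
  obtain ⟨t, ht⟩ : (Sᗮ).FG := IsNoetherian.noetherian Sᗮ
  -- C'
  set s' : Finset V := s ∪ t ∪ t.image (fun w => -w) with hs'def
  set C' : Set V := ⋂ y ∈ s', {v : V | 0 ≤ ⟪v, y⟫} with hC'def
  have hC'mem : ∀ v : V, v ∈ C' ↔ (∀ y ∈ s, 0 ≤ ⟪v, y⟫) ∧ ∀ w ∈ t, ⟪v, w⟫ = 0 := by
    intro v
    simp only [hC'def, Set.mem_iInter, Set.mem_setOf_eq, hs'def, Finset.mem_union,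
      Finset.mem_image]
    constructor
    · intro h
      refine ⟨fun y hy => h y (Or.inl (Or.inl hy)), fun w hw => ?_⟩
      have h1 : 0 ≤ ⟪v, w⟫ := h w (Or.inl (Or.inr hw))
      have h2 : 0 ≤ ⟪v, -w⟫ := h (-w) (Or.inr ⟨w, hw, rfl⟩)
      rw [inner_neg_right, neg_nonneg] at h2
      exact le_antisymm h2 h1
    · rintro ⟨h1, h2⟩ y hy
      rcases hy with (hy | hy) | ⟨w, hw, rfl⟩
      · exact h1 y hy
      · exact le_of_eq (h2 y hy).symm
      · rw [inner_neg_right, (h2 w hw), neg_zero]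
  have htmem : ∀ v : V, (∀ w ∈ t, ⟪v, w⟫ = 0) ↔ v ∈ S := by
    intro v
    conv_rhs => rw [← Submodule.orthogonal_orthogonal S, ← ht]
    rw [mem_orth_span_iff]
    simp only [Finset.mem_coe]
  have hC'mem' : ∀ v : V, v ∈ C' ↔ v ∈ C ∧ v ∈ S := by
    intro v; rw [hC'mem, hCmem, htmem]
  -- C' ⊆ C
  have hC'C : C' ⊆ C := fun v hv => ((hC'mem' v).mp hv).1
  -- the orthogonality condition set equals Sᗮᗮ = S
  have hOrthSet : {v : V | ∀ w ∈ F₀, ⟪v, w⟫ = 0} = (S : Set V) := by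
    ext v
    rw [hF₀]
    simp only [Set.mem_setOf_eq, SetLike.mem_coe]
    constructor
    · intro h
      rw [← Submodule.orthogonal_orthogonal S, Submodule.mem_orthogonal']
      exact h
    · intro hv w hw
      have := Submodule.mem_orthogonal' Sᗮ v
      rw [Submodule.orthogonal_orthogonal] at this
      exact real_inner_comm w v ▸ ((Submodule.mem_orthogonal Sᗮ v).mp
        (by rw [Submodule.orthogonal_orthogonal]; exact hv) w hw)
  refine ⟨⟨Sᗮ, hF₀.symm⟩, C', ⟨s', rfl⟩, ?_, ?_, ?_, ?_⟩
  -- pointedness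
  · have h0C' : (0 : V) ∈ C' := by
      rw [hC'mem]; constructor <;> intro y hy <;> simp
    constructor
    · refine ⟨∑ y ∈ s', y, ?_, ?_⟩
      · intro v hv
        simp only [hC'def, Set.mem_iInter, Set.mem_setOf_eq] at hv
        simp only [Set.mem_setOf_eq, inner_sum]
        exact Finset.sum_nonneg hv
      · ext v
        simp only [Set.mem_singleton_iff, Set.mem_inter_iff, Set.mem_setOf_eq]
        constructor
        · rintro rfl
          exact ⟨h0C', by simp⟩
        · rintro ⟨hv, hsum⟩
          have hv' : ∀ y ∈ s', 0 ≤ ⟪v, y⟫ := by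
            simpa only [hC'def, Set.mem_iInter, Set.mem_setOf_eq] using hv
          have hall : ∀ y ∈ s', ⟪v, y⟫ = 0 := (sum_inner_zero_iff s' v hv').mp hsum
          have hvS : v ∈ S := (htmem v).mp (fun w hw =>
            hall w (by simp [hs'def, hw]))
          have hvSperp : v ∈ Sᗮ := (hSperp v).mpr (fun y hy =>
            hall y (by simp [hs'def, hy]))
          have : ⟪v, v⟫ = 0 := (hSperp v).mp hvSperp |> fun _ => by
            exact (Submodule.mem_orthogonal' S v).mp hvSperp v hvS
          exact inner_self_eq_zero.mp this
    · rintro F ⟨y, hCy, rfl⟩ v hv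
      rw [Set.mem_singleton_iff] at hv
      subst hv
      exact ⟨h0C', by simp⟩
  -- C' ⊆ orth set
  · rw [hOrthSet]
    exact fun v hv => ((hC'mem' v).mp hv).2
  -- C = F₀ + C'
  · rw [hF₀]
    apply Set.Subset.antisymm
    · intro v hv
      obtain ⟨p, hp, q, hq, hpq⟩ := Sᗮ.exists_add_mem_mem_orthogonal v
      rw [Submodule.orthogonal_orthogonal] at hq
      have hqC : q ∈ C := by
        rw [hCmem]
        intro y hy
        have hpy : ⟪p, y⟫ = 0 := (hSperp p).mp hp y hy
        have : ⟪v, y⟫ = ⟪p, y⟫ + ⟪q, y⟫ := by rw [hpq, inner_add_left]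
        have hv' : 0 ≤ ⟪v, y⟫ := (hCmem v).mp hv y hy
        linarith [this ▸ hv']
      have hqC' : q ∈ C' := (hC'mem' q).mpr ⟨hqC, hq⟩
      rw [hpq]
      exact Set.add_mem_add hp hqC'
    · rintro v hv
      obtain ⟨p, hp, q, hq, rfl⟩ := Set.mem_add.mp hv
      rw [hCmem]
      intro y hy
      have hpy : ⟪p, y⟫ = 0 := (hSperp p).mp hp y hy
      have hqy : 0 ≤ ⟪q, y⟫ := (hCmem q).mp (hC'C hq) y hy
      rw [inner_add_left, hpy, zero_add]
      exact hqy
  -- dual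
  · ext v
    simp only [Set.mem_inter_iff, dualCone, Set.mem_setOf_eq]
    constructor
    · intro h
      constructor
      · intro w hw
        rw [hF₀] at hw
        have h1 : 0 ≤ ⟪v, w⟫ := h w (hWC hw)
        have h2 : 0 ≤ ⟪v, -w⟫ := h (-w) (hWC (by simpa using Submodule.neg_mem _ hw))
        rw [inner_neg_right, neg_nonneg] at h2
        exact le_antisymm h2 h1
      · exact fun c hc => h c (hC'C hc)
    · rintro ⟨h1, h2⟩ c hc
      obtain ⟨p, hp, q, hq, hpq⟩ := Sᗮ.exists_add_mem_mem_orthogonal c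
      rw [Submodule.orthogonal_orthogonal] at hq
      have hqC : q ∈ C := by
        rw [hCmem]
        intro y hy
        have hpy : ⟪p, y⟫ = 0 := (hSperp p).mp hp y hy
        have hcy : 0 ≤ ⟪c, y⟫ := (hCmem c).mp hc y hy
        rw [hpq, inner_add_left, hpy, zero_add] at hcy
        exact hcy
      have hqC' : q ∈ C' := (hC'mem' q).mpr ⟨hqC, hq⟩
      have hvp : ⟪v, p⟫ = 0 := h1 p (by rw [hF₀]; exact hp)
      have hvq : 0 ≤ ⟪v, q⟫ := h2 q hqC'
      rw [hpq, inner_add_right, hvp, zero_add]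
      exact hvq
end
end

section
/- For a polyhedral cone C and a face F of C, the map G ↦ A(F,G) is an inclusion-preserving bijection from the set of faces of C containing F to the set of faces of the angle cone A(F,C); moreover, for every face G ⊇ F one has A(A(F,G), A(F,C)) = A(G,C). -/
open scoped RealInnerProductSpace
open scoped Classical

noncomputable section

variable {V : Type*} [NormedAddCommGroup V] [InnerProductSpace ℝ V] [FiniteDimensional ℝ V]

/-! ### Auxiliary machinery -/

/-- The cone cut out by a finite set of normals. -/
def coneOf (s : Finset V) : Set V := ⋂ y ∈ s, {v : V | 0 ≤ ⟪v, y⟫}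

lemma mem_coneOf {s : Finset V} {v : V} : v ∈ coneOf s ↔ ∀ u ∈ s, 0 ≤ ⟪v, u⟫ := by
  simp [coneOf]

/-- Normals in `s` that are tight on `F`. -/
def tightSet (s : Finset V) (F : Set V) : Finset V :=
  s.filter (fun u => ∀ x ∈ F, ⟪x, u⟫ = 0)

lemma mem_tightSet {s : Finset V} {F : Set V} {u : V} :
    u ∈ tightSet s F ↔ u ∈ s ∧ ∀ x ∈ F, ⟪x, u⟫ = 0 := Finset.mem_filter

lemma convex_coneOf (s : Finset V) : Convex ℝ (coneOf s) := by
  intro x hx y hy a b ha hb hab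
  rw [mem_coneOf] at *
  intro u hu
  have h1 := hx u hu
  have h2 := hy u hu
  simp only [inner_add_left, real_inner_smul_left]
  nlinarith

lemma zero_mem_coneOf (s : Finset V) : (0 : V) ∈ coneOf s := by
  rw [mem_coneOf]; intro u _; simp

/-- From a relative interior point one can move slightly beyond, away from any point of `F`. -/
lemma exists_extend {F : Set V} {z f : V}
    (hz : z ∈ intrinsicInterior ℝ F) (hf : f ∈ F) :
    ∃ δ : ℝ, 0 < δ ∧ z + δ • (z - f) ∈ F := by
  obtain ⟨z', hz', hz'eq⟩ := mem_intrinsicInterior.1 hz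
  have hfs : f ∈ affineSpan ℝ F := subset_affineSpan ℝ F hf
  have hzs : z ∈ affineSpan ℝ F := by rw [← hz'eq]; exact z'.2
  have hmem : ∀ t : ℝ, z + t • (z - f) ∈ affineSpan ℝ F := by
    intro t
    have := AffineSubspace.smul_vsub_vadd_mem (affineSpan ℝ F) t hzs hfs hzs
    simpa [vsub_eq_sub, vadd_eq_add, add_comm] using this
  set g : ℝ → affineSpan ℝ F := fun t => ⟨z + t • (z - f), hmem t⟩ with hg
  have hgc : Continuous g := by
    apply Continuous.subtype_mk
    exact continuous_const.add ((continuous_id.smul continuous_const))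
  have hgz : g 0 = z' := by
    apply Subtype.ext
    simp [hg, hz'eq]
  have hg0 : g 0 ∈ interior (((↑) : affineSpan ℝ F → V) ⁻¹' F) := by
    rw [hgz]; exact hz'
  have hopen : IsOpen (g ⁻¹' interior (((↑) : affineSpan ℝ F → V) ⁻¹' F)) :=
    isOpen_interior.preimage hgc
  obtain ⟨ε, hε, hball⟩ := Metric.isOpen_iff.1 hopen 0 hg0
  refine ⟨ε / 2, by positivity, ?_⟩
  have : (ε / 2 : ℝ) ∈ Metric.ball (0 : ℝ) ε := by
    simp only [Metric.mem_ball, Real.dist_eq, sub_zero]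
    rw [abs_of_pos (by positivity)]
    linarith
  have hmem2 := hball this
  have h3 : g (ε / 2) ∈ ((↑) : affineSpan ℝ F → V) ⁻¹' F := interior_subset hmem2
  exact h3

/-- A relative interior point is strictly positive on any constraint not tight on `F`. -/
lemma relint_pos {F : Set V} {u z : V} (hFu : ∀ x ∈ F, 0 ≤ ⟪x, u⟫)
    (hz : z ∈ intrinsicInterior ℝ F) (hnt : ¬ ∀ x ∈ F, ⟪x, u⟫ = 0) :
    0 < ⟪z, u⟫ := by
  push_neg at hnt
  obtain ⟨f, hf, hfu⟩ := hnt
  have hfpos : 0 < ⟪f, u⟫ := lt_of_le_of_ne (hFu f hf) (Ne.symm hfu)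
  have hzF : z ∈ F := intrinsicInterior_subset hz
  rcases (hFu z hzF).lt_or_eq with h | h
  · exact h
  exfalso
  obtain ⟨δ, hδ, hmem⟩ := exists_extend hz hf
  have hge := hFu _ hmem
  have : ⟪z + δ • (z - f), u⟫ = ⟪z, u⟫ + δ * (⟪z, u⟫ - ⟪f, u⟫) := by
    simp [inner_add_left, inner_smul_left, inner_sub_left]
  rw [this, ← h] at hge
  nlinarith

/-- One can move a little from `z` in direction `w` and stay in the cone, provided `z` is
strictly inside every constraint on which `w` is negative. -/
lemma exists_small {s : Finset V} {z w : V}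
    (hz : ∀ u ∈ s, 0 ≤ ⟪z, u⟫) (h : ∀ u ∈ s, ⟪w, u⟫ < 0 → 0 < ⟪z, u⟫) :
    ∃ t : ℝ, 0 < t ∧ z + t • w ∈ coneOf s := by
  classical
  set f : V → ℝ := fun u => if ⟪w, u⟫ < 0 then ⟪z, u⟫ / (-⟪w, u⟫) else 1 with hf
  set T : Finset ℝ := insert (1 : ℝ) (s.image f) with hT
  have hTne : T.Nonempty := ⟨1, Finset.mem_insert_self _ _⟩
  set t : ℝ := T.min' hTne with ht
  have htpos : 0 < t := by
    apply (Finset.lt_min'_iff T hTne).2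
    intro b hb
    rw [hT, Finset.mem_insert] at hb
    rcases hb with rfl | hb
    · norm_num
    · obtain ⟨u, hu, rfl⟩ := Finset.mem_image.1 hb
      rw [hf]
      by_cases hwu : ⟪w, u⟫ < 0
      · simp only [hwu, if_pos]
        exact div_pos (h u hu hwu) (by linarith)
      · simp [hwu]
  refine ⟨t, htpos, ?_⟩
  rw [mem_coneOf]
  intro u hu
  have hinner : ⟪z + t • w, u⟫ = ⟪z, u⟫ + t * ⟪w, u⟫ := by
    simp [inner_add_left, inner_smul_left]
  rw [hinner]
  by_cases hwu : ⟪w, u⟫ < 0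
  · have htle : t ≤ ⟪z, u⟫ / (-⟪w, u⟫) := by
      apply Finset.min'_le
      rw [hT]
      refine Finset.mem_insert_of_mem (Finset.mem_image.2 ⟨u, hu, ?_⟩)
      rw [hf]; simp [hwu]
    have hwpos : 0 < -⟪w, u⟫ := by linarith
    rw [le_div_iff₀ hwpos] at htle
    nlinarith
  · push_neg at hwu
    have := hz u hu
    nlinarith

lemma face_convex {s : Finset V} {y : V} :
    Convex ℝ (coneOf s ∩ {v : V | ⟪v, y⟫ = 0}) := by
  apply (convex_coneOf s).inter
  intro x hx y' hy' a b ha hb hab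
  simp only [Set.mem_setOf_eq] at *
  simp [inner_add_left, real_inner_smul_left, hx, hy']

lemma face_relint_nonempty {s : Finset V} {y : V} {F : Set V}
    (hFeq : F = coneOf s ∩ {v : V | ⟪v, y⟫ = 0}) :
    (intrinsicInterior ℝ F).Nonempty := by
  subst hFeq
  apply Set.Nonempty.intrinsicInterior face_convex
  exact ⟨0, zero_mem_coneOf s, by simp⟩

/-- Key lemma: the angle cone of a face is cut out by the tight constraints. -/
lemma angle_eq {s : Finset V} {y : V} {F : Set V}
    (hCy : coneOf s ⊆ {v : V | 0 ≤ ⟪v, y⟫}) (hFeq : F = coneOf s ∩ {v : V | ⟪v, y⟫ = 0}) :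
    angleCone F (coneOf s) = coneOf (tightSet s F) := by
  have hFC : F ⊆ coneOf s := by rw [hFeq]; exact Set.inter_subset_left
  apply Set.Subset.antisymm
  · rintro w ⟨a, ha, x, hx, z₀, hz₀, rfl⟩
    rw [mem_coneOf]
    intro u hu
    obtain ⟨hus, hut⟩ := mem_tightSet.1 hu
    have hz₀F : z₀ ∈ F := intrinsicInterior_subset hz₀
    have h1 : ⟪z₀, u⟫ = 0 := hut z₀ hz₀F
    have h2 : 0 ≤ ⟪x, u⟫ := mem_coneOf.1 hx u hus
    have h3 : ⟪a • (x - z₀), u⟫ = a * (⟪x, u⟫ - ⟪z₀, u⟫) := by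
      simp [real_inner_smul_left, inner_sub_left]
    rw [h3, h1]
    nlinarith
  · intro w hw
    obtain ⟨z, hz⟩ := face_relint_nonempty hFeq
    have hzF : z ∈ F := intrinsicInterior_subset hz
    have hzC : z ∈ coneOf s := hFC hzF
    have hpos : ∀ u ∈ s, ⟪w, u⟫ < 0 → 0 < ⟪z, u⟫ := by
      intro u hu hwu
      apply relint_pos (fun x hx => mem_coneOf.1 (hFC hx) u hu) hz
      intro hall
      have hmem : u ∈ tightSet s F := mem_tightSet.2 ⟨hu, hall⟩
      exact absurd (mem_coneOf.1 hw u hmem) (not_le.2 hwu)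
    obtain ⟨t, htpos, hxt⟩ := exists_small (mem_coneOf.1 hzC) hpos
    refine ⟨t⁻¹, by positivity, z + t • w, hxt, z, hz, ?_⟩
    rw [add_sub_cancel_left, smul_smul, inv_mul_cancel₀ (ne_of_gt htpos), one_smul]

/-- Any intersection of the cone with tight hyperplanes from `s` is a face. -/
lemma face_inter_perp {s T : Finset V} (hT : T ⊆ s) :
    IsFaceOf (coneOf s ∩ {v : V | ∀ u ∈ T, ⟪v, u⟫ = 0}) (coneOf s) := by
  refine ⟨∑ u ∈ T, u, ?_, ?_⟩
  · intro v hv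
    simp only [Set.mem_setOf_eq, inner_sum]
    exact Finset.sum_nonneg fun u hu => mem_coneOf.1 hv u (hT hu)
  · ext v
    simp only [Set.mem_inter_iff, Set.mem_setOf_eq, inner_sum]
    constructor
    · rintro ⟨hv, hperp⟩
      exact ⟨hv, Finset.sum_eq_zero hperp⟩
    · rintro ⟨hv, hsum⟩
      refine ⟨hv, fun u hu => ?_⟩
      exact (Finset.sum_eq_zero_iff_of_nonneg
        (fun u hu => mem_coneOf.1 hv u (hT hu))).1 hsum u hu

/-- Every face equals the cone intersected with its tight hyperplanes. -/
lemma face_eq_tight {s : Finset V} {G : Set V} (hG : IsFaceOf G (coneOf s)) :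
    G = coneOf s ∩ {v : V | ∀ u ∈ tightSet s G, ⟪v, u⟫ = 0} := by
  obtain ⟨y, hCy, hGeq⟩ := hG
  have hGC : G ⊆ coneOf s := by rw [hGeq]; exact Set.inter_subset_left
  apply Set.Subset.antisymm
  · intro v hv
    exact ⟨hGC hv, fun u hu => (mem_tightSet.1 hu).2 v hv⟩
  · rintro v ⟨hvC, hvperp⟩
    obtain ⟨z, hz⟩ := face_relint_nonempty hGeq
    have hzG : z ∈ G := intrinsicInterior_subset hz
    have hpos : ∀ u ∈ s, ⟪-v, u⟫ < 0 → 0 < ⟪z, u⟫ := by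
      intro u hu hneg
      apply relint_pos (fun x hx => mem_coneOf.1 (hGC hx) u hu) hz
      intro hall
      have hmem : u ∈ tightSet s G := mem_tightSet.2 ⟨hu, hall⟩
      have := hvperp u hmem
      rw [inner_neg_left] at hneg
      linarith
    obtain ⟨t, htpos, hxt⟩ := exists_small (mem_coneOf.1 (hGC hzG)) hpos
    have h1 : 0 ≤ ⟪z + t • (-v), y⟫ := hCy hxt
    have h2 : ⟪z, y⟫ = 0 := by rw [hGeq] at hzG; exact hzG.2
    have h3 : 0 ≤ ⟪v, y⟫ := hCy hvC
    have h4 : ⟪z + t • (-v), y⟫ = ⟪z, y⟫ - t * ⟪v, y⟫ := by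
      simp only [inner_add_left, real_inner_smul_left, inner_neg_left]
      ring
    rw [h4, h2] at h1
    rw [hGeq]
    refine ⟨hvC, ?_⟩
    simp only [Set.mem_setOf_eq]
    nlinarith

lemma angleCone_mono {F G G' : Set V} (h : G ⊆ G') : angleCone F G ⊆ angleCone F G' := by
  rintro w ⟨a, ha, x, hx, z, hz, rfl⟩
  exact ⟨a, ha, x, h hx, z, hz, rfl⟩

/-- The angle cone at `F` of a face `G ⊇ F`, in halfspace form. -/
lemma angle_face {s : Finset V} {y : V} {F G : Set V}
    (hCy : coneOf s ⊆ {v : V | 0 ≤ ⟪v, y⟫}) (hFeq : F = coneOf s ∩ {v : V | ⟪v, y⟫ = 0})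
    (hG : IsFaceOf G (coneOf s)) (hFG : F ⊆ G) :
    angleCone F G = coneOf (tightSet s F) ∩ {v : V | ∀ u ∈ tightSet s G, ⟪v, u⟫ = 0} := by
  classical
  obtain ⟨yG, hCyG, hGeq⟩ := hG
  have hGC : G ⊆ coneOf s := by rw [hGeq]; exact Set.inter_subset_left
  set s' : Finset V := s ∪ (tightSet s G).image (fun u => -u) with hs'
  have hGs' : G = coneOf s' := by
    rw [face_eq_tight ⟨yG, hCyG, hGeq⟩]
    ext v
    simp only [Set.mem_inter_iff, mem_coneOf, Set.mem_setOf_eq, hs', Finset.mem_union,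
      Finset.mem_image]
    constructor
    · rintro ⟨hv, hperp⟩ u hu
      rcases hu with hu | ⟨u₀, hu₀, rfl⟩
      · exact hv u hu
      · rw [inner_neg_right, hperp u₀ hu₀]; norm_num
    · intro hv
      refine ⟨fun u hu => hv u (Or.inl hu), fun u hu => ?_⟩
      have h1 := hv u (Or.inl (mem_tightSet.1 hu).1)
      have h2 := hv (-u) (Or.inr ⟨u, hu, rfl⟩)
      rw [inner_neg_right] at h2
      linarith
  have hFGface : F = coneOf s' ∩ {v : V | ⟪v, y⟫ = 0} := by
    rw [← hGs']
    apply Set.Subset.antisymm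
    · intro x hx
      exact ⟨hFG hx, (by rw [hFeq] at hx; exact hx.2)⟩
    · rintro x ⟨hxG, hxy⟩
      rw [hFeq]
      exact ⟨hGC hxG, hxy⟩
  have hCy' : coneOf s' ⊆ {v : V | 0 ≤ ⟪v, y⟫} := by
    rw [← hGs']
    exact fun x hx => hCy (hGC hx)
  have hA : angleCone F G = coneOf (tightSet s' F) := by
    rw [hGs']
    exact angle_eq hCy' hFGface
  rw [hA]
  ext v
  simp only [Set.mem_inter_iff, mem_coneOf, Set.mem_setOf_eq]
  constructor
  · intro hv
    constructor
    · intro u hu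
      obtain ⟨hus, hut⟩ := mem_tightSet.1 hu
      exact hv u (mem_tightSet.2 ⟨Finset.mem_union_left _ hus, hut⟩)
    · intro u hu
      obtain ⟨hus, hut⟩ := mem_tightSet.1 hu
      have hFt : ∀ x ∈ F, ⟪x, u⟫ = 0 := fun x hx => hut x (hFG hx)
      have h1 := hv u (mem_tightSet.2 ⟨Finset.mem_union_left _ hus, hFt⟩)
      have h2 := hv (-u) (mem_tightSet.2 ⟨Finset.mem_union_right _
        (Finset.mem_image.2 ⟨u, hu, rfl⟩),
        fun x hx => by rw [inner_neg_right, hFt x hx]; norm_num⟩)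
      rw [inner_neg_right] at h2
      linarith
  · rintro ⟨h1, h2⟩ u hu
    obtain ⟨hus', hut⟩ := mem_tightSet.1 hu
    rcases Finset.mem_union.1 hus' with hus | hneg
    · exact h1 u (mem_tightSet.2 ⟨hus, hut⟩)
    · obtain ⟨u₀, hu₀, rfl⟩ := Finset.mem_image.1 hneg
      rw [inner_neg_right, h2 u₀ hu₀]
      norm_num

theorem stmt6 (C F : Set V) (hC : IsPolyCone C) (hF : IsFaceOf F C) :
    Set.BijOn (fun G : Set V => angleCone F G)
        {G : Set V | IsFaceOf G C ∧ F ⊆ G}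
        {A : Set V | IsFaceOf A (angleCone F C)} ∧
    (∀ G G' : Set V, IsFaceOf G C → F ⊆ G → IsFaceOf G' C → F ⊆ G' →
        (G ⊆ G' ↔ angleCone F G ⊆ angleCone F G')) ∧
    (∀ G : Set V, IsFaceOf G C → F ⊆ G →
        angleCone (angleCone F G) (angleCone F C) = angleCone G C) := by
  classical
  obtain ⟨s, hCs⟩ := hC
  have hC' : C = coneOf s := hCs
  subst hC'
  obtain ⟨y, hCy, hFeq⟩ := hF
  have hD : angleCone F (coneOf s) = coneOf (tightSet s F) := angle_eq hCy hFeq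
  have hFC : F ⊆ coneOf s := by rw [hFeq]; exact Set.inter_subset_left
  obtain ⟨zF, hzF⟩ := face_relint_nonempty hFeq
  have hzFF : zF ∈ F := intrinsicInterior_subset hzF
  have htsub : ∀ {G : Set V}, F ⊆ G → tightSet s G ⊆ tightSet s F := by
    intro G hFG u hu
    obtain ⟨h1, h2⟩ := mem_tightSet.1 hu
    exact mem_tightSet.2 ⟨h1, fun x hx => h2 x (hFG hx)⟩
  have hts : tightSet s F ⊆ s := Finset.filter_subset _ _
  have horder : ∀ G G' : Set V, IsFaceOf G (coneOf s) → F ⊆ G → IsFaceOf G' (coneOf s) →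
      F ⊆ G' → (G ⊆ G' ↔ angleCone F G ⊆ angleCone F G') := by
    intro G G' hG hFG hG' hFG'
    constructor
    · exact fun h => angleCone_mono h
    · intro h x hx
      have hxz : x - zF ∈ angleCone F G := ⟨1, one_pos, x, hx, zF, hzF, by rw [one_smul]⟩
      have h2 := h hxz
      rw [angle_face hCy hFeq hG' hFG'] at h2
      rw [face_eq_tight hG']
      have hGC : G ⊆ coneOf s := by
        obtain ⟨yG, hCyG, hGeq⟩ := hG
        rw [hGeq]; exact Set.inter_subset_left
      refine ⟨hGC hx, fun u hu => ?_⟩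
      have h3 := h2.2 u hu
      have h4 : ⟪zF, u⟫ = 0 := (mem_tightSet.1 (htsub hFG' hu)).2 zF hzFF
      rw [inner_sub_left] at h3
      linarith
  have hmaps : ∀ G : Set V, IsFaceOf G (coneOf s) → F ⊆ G →
      IsFaceOf (angleCone F G) (angleCone F (coneOf s)) := by
    intro G hG hFG
    rw [hD, angle_face hCy hFeq hG hFG]
    exact face_inter_perp (htsub hFG)
  have hsurj : ∀ A : Set V, IsFaceOf A (angleCone F (coneOf s)) →
      ∃ G, (IsFaceOf G (coneOf s) ∧ F ⊆ G) ∧ angleCone F G = A := by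
    intro A hA
    rw [hD] at hA
    set T' := tightSet (tightSet s F) A with hT'
    have hAeq : A = coneOf (tightSet s F) ∩ {v : V | ∀ u ∈ T', ⟪v, u⟫ = 0} := face_eq_tight hA
    set G := coneOf s ∩ {v : V | ∀ u ∈ T', ⟪v, u⟫ = 0} with hGdef
    have hT's : T' ⊆ tightSet s F := Finset.filter_subset _ _
    have hGface : IsFaceOf G (coneOf s) := face_inter_perp (hT's.trans hts)
    have hFG : F ⊆ G := by
      intro x hx
      exact ⟨hFC hx, fun u hu => (mem_tightSet.1 (hT's hu)).2 x hx⟩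
    refine ⟨G, ⟨hGface, hFG⟩, ?_⟩
    rw [angle_face hCy hFeq hGface hFG, hAeq]
    have hT'G : T' ⊆ tightSet s G := by
      intro u hu
      exact mem_tightSet.2 ⟨hts (hT's hu), fun x hx => hx.2 u hu⟩
    apply Set.Subset.antisymm
    · intro w hw
      exact ⟨hw.1, fun u hu => hw.2 u (hT'G hu)⟩
    · rintro w ⟨hwD, hwT'⟩
      refine ⟨hwD, fun u hu => ?_⟩
      obtain ⟨hus, hut⟩ := mem_tightSet.1 hu
      have hpos : ∀ u' ∈ s, ⟪w, u'⟫ < 0 → 0 < ⟪zF, u'⟫ := by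
        intro u' hu' hwu'
        apply relint_pos (fun x hx => mem_coneOf.1 (hFC hx) u' hu') hzF
        intro hall
        exact absurd (mem_coneOf.1 hwD u' (mem_tightSet.2 ⟨hu', hall⟩)) (not_le.2 hwu')
      obtain ⟨t, htpos, hxt⟩ := exists_small (mem_coneOf.1 (hFC hzFF)) hpos
      have hxG : zF + t • w ∈ G := by
        refine ⟨hxt, fun u' hu' => ?_⟩
        have hz0 : ⟪zF, u'⟫ = 0 := (mem_tightSet.1 (hT's hu')).2 zF hzFF
        have hw0 : ⟪w, u'⟫ = 0 := hwT' u' hu'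
        simp [inner_add_left, real_inner_smul_left, hz0, hw0]
      have hx0 : ⟪zF + t • w, u⟫ = 0 := hut _ hxG
      have hz0 : ⟪zF, u⟫ = 0 := (mem_tightSet.1 (htsub hFG hu)).2 zF hzFF
      rw [inner_add_left, real_inner_smul_left, hz0] at hx0
      rcases mul_eq_zero.1 (by linarith : t * ⟪w, u⟫ = 0) with h | h
      · exact absurd h (ne_of_gt htpos)
      · exact h
  have hpart3 : ∀ G : Set V, IsFaceOf G (coneOf s) → F ⊆ G →
      angleCone (angleCone F G) (angleCone F (coneOf s)) = angleCone G (coneOf s) := by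
    intro G hG hFG
    have hAG : angleCone F G
        = coneOf (tightSet s F) ∩ {v : V | ∀ u ∈ tightSet s G, ⟪v, u⟫ = 0} :=
      angle_face hCy hFeq hG hFG
    have hface : IsFaceOf (angleCone F G) (coneOf (tightSet s F)) := by
      rw [hAG]; exact face_inter_perp (htsub hFG)
    obtain ⟨y', hCy', hFeq'⟩ := hface
    have h1 : angleCone (angleCone F G) (coneOf (tightSet s F)) =
        coneOf (tightSet (tightSet s F) (angleCone F G)) := angle_eq hCy' hFeq'
    obtain ⟨yG, hCyG, hGeq⟩ := hG
    have h2 : angleCone G (coneOf s) = coneOf (tightSet s G) := angle_eq hCyG hGeq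
    rw [hD, h1, h2]
    have hsets : tightSet (tightSet s F) (angleCone F G) = tightSet s G := by
      apply Finset.ext
      intro u
      simp only [mem_tightSet]
      constructor
      · rintro ⟨⟨hus, hutF⟩, hutA⟩
        refine ⟨hus, fun x hx => ?_⟩
        have hxz : x - zF ∈ angleCone F G := ⟨1, one_pos, x, hx, zF, hzF, by rw [one_smul]⟩
        have h3 := hutA _ hxz
        rw [inner_sub_left, hutF zF hzFF] at h3
        linarith
      · rintro ⟨hus, hutG⟩
        refine ⟨⟨hus, fun x hx => hutG x (hFG hx)⟩, fun w hw => ?_⟩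
        rw [hAG] at hw
        exact hw.2 u (mem_tightSet.2 ⟨hus, hutG⟩)
    rw [hsets]
  refine ⟨⟨?_, ?_, ?_⟩, horder, hpart3⟩
  · intro G hG
    exact hmaps G hG.1 hG.2
  · intro G hG G' hG' heq
    simp only [Set.mem_setOf_eq] at hG hG' heq
    have ha := (horder G G' hG.1 hG.2 hG'.1 hG'.2).2 (by rw [heq])
    have hb := (horder G' G hG'.1 hG'.2 hG.1 hG.2).2 (by rw [heq])
    exact Set.Subset.antisymm ha hb
  · intro A hA
    obtain ⟨G, hG, hGA⟩ := hsurj A hA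
    exact ⟨G, hG, hGA⟩
end
end

section
/- For a polyhedral cone C and a face F of C, the map G ↦ A(G,C)* is an inclusion-reversing bijection from the set of faces of C containing F to the set of faces of the cone A(F,C)*; moreover, for every face G ⊇ F one has A(A(G,C)*, A(F,C)*) = A(F,G)*. -/
/-! Write `C = dualCone s` with `s` finite. A face `G` of `C` is cut out by the constraints
`activeSet s G` that vanish on it, and `A(G, C)` is the cone defined by these constraints alone:
from a relative interior point of `G` one can move a little in any direction they allow. By
Farkas' lemma `A(G, C)*` is then the cone generated by `activeSet s G`, and the faces of the cone
generated by `activeSet s F` are the cones generated by the sets `activeSet s G` with `F ⊆ G`.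
For the last identity, `G` is the cone defined by `s` and the negatives of `activeSet s G`; in
this description `F` has active set `activeSet s F ∪ -activeSet s G`, and both sides equal the
cone it generates: the cone of `activeSet s F` plus the span of `activeSet s G`. -/

open scoped RealInnerProductSpace
open scoped Classical

noncomputable section

variable {V : Type*} [NormedAddCommGroup V] [InnerProductSpace ℝ V] [FiniteDimensional ℝ V]

open Filter Topology
open scoped Pointwise

section InnerProductSpace

variable {E : Type*} [NormedAddCommGroup E] [InnerProductSpace ℝ E]

theorem exists_add_smul_mem_of_mem_intrinsicInterior {K : Set E} {z d : E}
    (hz : z ∈ intrinsicInterior ℝ K) (hd : d ∈ (affineSpan ℝ K).direction) :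
    ∃ ε : ℝ, 0 < ε ∧ z + ε • d ∈ K := by
  obtain ⟨p, hp, rfl⟩ := hz
  let γ : ℝ → affineSpan ℝ K := fun t =>
    ⟨t • d + (p : E), AffineSubspace.vadd_mem_of_mem_direction (Submodule.smul_mem _ t hd) p.2⟩
  have hγ : Continuous γ := by fun_prop
  have hγ0 : γ 0 = p := by ext; simp [γ]
  have hnear : ∀ᶠ t in 𝓝[>] 0, γ t ∈ interior (((↑) : affineSpan ℝ K → E) ⁻¹' K) :=
    nhdsWithin_le_nhds <| hγ.continuousAt.preimage_mem_nhds (hγ0 ▸ isOpen_interior.mem_nhds hp)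
  obtain ⟨ε, hεK, hε⟩ := (hnear.and self_mem_nhdsWithin).exists
  exact ⟨ε, hε, by simpa [γ, add_comm] using interior_subset hεK⟩

theorem inner_eq_zero_of_mem_intrinsicInterior {K : Set E} {x y z : E}
    (hK : ∀ v ∈ K, 0 ≤ ⟪v, y⟫) (hz : z ∈ intrinsicInterior ℝ K) (hzy : ⟪z, y⟫ = 0)
    (hx : x ∈ K) : ⟪x, y⟫ = 0 := by
  have hzK := intrinsicInterior_subset hz
  obtain ⟨ε, hε, hmem⟩ := exists_add_smul_mem_of_mem_intrinsicInterior hz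
    (AffineSubspace.vsub_mem_direction (subset_affineSpan ℝ K hzK) (subset_affineSpan ℝ K hx))
  have := hK _ hmem
  simp only [vsub_eq_sub, inner_add_left, real_inner_smul_left, inner_sub_left, hzy] at this
  nlinarith [hK x hx]

theorem inner_sub_smul_comm (a v w x : E) :
    ⟪w - (⟪w, a⟫ / ⟪v, a⟫) • v, x⟫ = ⟪w, x - (⟪v, x⟫ / ⟪v, a⟫) • a⟫ := by
  simp only [inner_sub_left, inner_sub_right, real_inner_smul_left, real_inner_smul_right]
  ring

/-- Farkas' lemma for a finite family. In the induction step, if `v` separates `b` from the cone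
of the old vectors, then `⟪v, a⟫ < 0` for the new vector `a`, and the whole problem is projected
along `a` onto the hyperplane `⟪v, ·⟫ = 0`. -/
theorem mem_hull_of_forall_inner_nonneg {ι : Type*} (t : Finset ι) (y : ι → E) {b : E}
    (h : ∀ v, (∀ i ∈ t, 0 ≤ ⟪v, y i⟫) → 0 ≤ ⟪v, b⟫) : b ∈ PointedCone.hull ℝ (y '' t) := by
  classical
  induction t using Finset.induction_on generalizing y b with
  | empty =>
    have hb : b = 0 := by simpa using h (-b) (by simp)
    exact hb ▸ zero_mem _
  | insert i₀ t hi₀ ih =>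
    set H := PointedCone.hull ℝ (y '' ↑(insert i₀ t))
    have hyH : ∀ i ∈ insert i₀ t, y i ∈ H := fun i hi =>
      PointedCone.subset_hull (Set.mem_image_of_mem y hi)
    simp only [Finset.forall_mem_insert] at h
    by_cases hsmall : ∀ v, (∀ i ∈ t, 0 ≤ ⟪v, y i⟫) → 0 ≤ ⟪v, b⟫
    · exact Submodule.span_mono (Set.image_mono (by simp)) (ih y hsmall)
    push Not at hsmall
    obtain ⟨v, hv, hvb⟩ := hsmall
    set a := y i₀
    have hva : ⟪v, a⟫ < 0 := by
      by_contra! hva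
      exact hvb.not_ge (h v ⟨hva, hv⟩)
    have haH : a ∈ H := hyH i₀ (Finset.mem_insert_self _ _)
    have hproj : b - (⟪v, b⟫ / ⟪v, a⟫) • a ∈ H := by
      refine Submodule.span_le.2 ?_ (ih (fun i => y i - (⟪v, y i⟫ / ⟪v, a⟫) • a) fun w hw => ?_)
      · rintro _ ⟨i, hi, rfl⟩
        show y i - _ ∈ H
        rw [sub_eq_add_neg, ← neg_smul, ← neg_div]
        exact H.add_mem (hyH i (Finset.mem_insert_of_mem hi))
          (H.smul_mem (div_nonneg_of_nonpos (neg_nonpos.2 (hv i hi)) hva.le) haH)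
      · simp only [← inner_sub_smul_comm] at hw ⊢
        refine h _ ⟨?_, hw⟩
        rw [inner_sub_smul_comm, div_self hva.ne, one_smul, sub_self, inner_zero_right]
    simpa only [sub_add_cancel] using
      H.add_mem hproj (H.smul_mem (div_pos_of_neg_of_neg hvb hva).le haH)

theorem dualCone_eq_coe_dual (S : Set E) : dualCone S = PointedCone.dual (innerₗ E).flip S := rfl

theorem hull_subset_dualCone_dualCone (T : Set E) :
    (PointedCone.hull ℝ T : Set E) ⊆ dualCone (dualCone T) := by
  rw [dualCone_eq_coe_dual (dualCone T)]
  exact Submodule.span_le.2 fun y hy v hv => show 0 ≤ ⟪y, v⟫ from real_inner_comm y v ▸ hv y hy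

theorem dualCone_dualCone_finset (T : Finset E) :
    dualCone (dualCone (T : Set E)) = PointedCone.hull ℝ (T : Set E) := by
  refine subset_antisymm (fun b hb => ?_) (hull_subset_dualCone_dualCone _)
  simpa using mem_hull_of_forall_inner_nonneg T id fun v hv => real_inner_comm v b ▸ hb v hv

theorem inner_eq_zero_of_mem_hull {T : Set E} {x z : E} (hz : ∀ y ∈ T, ⟪z, y⟫ = 0)
    (hx : x ∈ PointedCone.hull ℝ T) : ⟪z, x⟫ = 0 := by
  have h := hull_subset_dualCone_dualCone T hx
  have h₁ := h z fun y hy => (hz y hy).ge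
  have h₂ := h (-z) fun y hy => by simp [hz y hy]
  rw [inner_neg_right] at h₂
  rw [real_inner_comm]
  linarith

theorem hull_inter_hyperplane (T : Finset E) {z : E} (hz : ∀ y ∈ T, 0 ≤ ⟪y, z⟫) :
    (PointedCone.hull ℝ (T : Set E) : Set E) ∩ {x | ⟪x, z⟫ = 0} =
      PointedCone.hull ℝ (T.filter fun y => ⟪y, z⟫ = 0 : Set E) := by
  apply subset_antisymm
  · rintro x ⟨hx, hxz⟩
    obtain ⟨c, hcT, hc, rfl⟩ := PointedCone.mem_hull_set.1 hx
    refine PointedCone.mem_hull_set.2 ⟨c, fun y hy => ?_, hc, rfl⟩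
    have hyT : y ∈ T := hcT hy
    have hterms : ∀ y ∈ c.support, c y * ⟪y, z⟫ = 0 := by
      refine (Finset.sum_eq_zero_iff_of_nonneg fun y hy => mul_nonneg (hc y) (hz y (hcT hy))).1 ?_
      simpa [Finsupp.sum, sum_inner, real_inner_smul_left] using hxz
    simpa [hyT, Finsupp.mem_support_iff.1 hy] using hterms y hy
  · intro x hx
    refine ⟨Submodule.span_mono (Finset.coe_subset.2 (Finset.filter_subset _ _)) hx, ?_⟩
    exact (real_inner_comm _ _).trans
      (inner_eq_zero_of_mem_hull (fun y hy => by
        rw [real_inner_comm]; exact (Finset.mem_filter.1 hy).2) hx)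

theorem isFaceOf_hull_filter (T : Finset E) {z : E} (hz : ∀ y ∈ T, 0 ≤ ⟪y, z⟫) :
    IsFaceOf (PointedCone.hull ℝ (T.filter fun y => ⟪y, z⟫ = 0 : Set E) : Set E)
      (PointedCone.hull ℝ (T : Set E)) :=
  ⟨z, fun _ hx => hull_subset_dualCone_dualCone _ hx z fun y hy => real_inner_comm z y ▸ hz y hy,
    (hull_inter_hyperplane T hz).symm⟩

theorem coe_span_eq_hull_union_neg (S : Set E) :
    (Submodule.span ℝ S : Set E) = PointedCone.hull ℝ (S ∪ -S) := by
  set H := PointedCone.hull ℝ (S ∪ -S)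
  refine subset_antisymm (fun x hx => ?_) fun x hx => ?_
  · suffices x ∈ H ∧ -x ∈ H from this.1
    induction hx using Submodule.span_induction with
    | mem y hy =>
      exact ⟨PointedCone.subset_hull (.inl hy), PointedCone.subset_hull (.inr (by simpa))⟩
    | zero => simp
    | add x y _ _ hx hy => exact ⟨add_mem hx.1 hy.1, neg_add x y ▸ add_mem hx.2 hy.2⟩
    | smul r x _ hx =>
      rcases le_total 0 r with hr | hr
      · exact ⟨H.smul_mem hr hx.1, smul_neg r x ▸ H.smul_mem hr hx.2⟩
      · exact ⟨neg_smul_neg r x ▸ H.smul_mem (neg_nonneg.2 hr) hx.2,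
          neg_smul r x ▸ H.smul_mem (neg_nonneg.2 hr) hx.1⟩
  · refine PointedCone.hull_le_span ℝ _ hx |> Submodule.span_le.2 ?_
    rintro y (hy | hy)
    · exact Submodule.subset_span hy
    · simpa using Submodule.neg_mem _ (Submodule.subset_span (R := ℝ) hy)

theorem hull_union_neg {S T : Finset E} (hST : S ⊆ T) :
    (PointedCone.hull ℝ ((T ∪ -S : Finset E) : Set E) : Set E) =
      (PointedCone.hull ℝ (T : Set E) : Set E) + (Submodule.span ℝ (S : Set E) : Set E) := by
  have hunion : ((T ∪ -S : Finset E) : Set E) = (T : Set E) ∪ ((S : Set E) ∪ -(S : Set E)) := by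
    rw [Finset.coe_union, Finset.coe_neg, ← Set.union_assoc,
      Set.union_eq_left.2 (Finset.coe_subset.2 hST)]
  ext x
  rw [SetLike.mem_coe, hunion, PointedCone.hull, Submodule.span_union, Submodule.mem_sup,
    Set.mem_add, coe_span_eq_hull_union_neg]
  rfl

theorem angleCone_eq_add_span [FiniteDimensional ℝ E] {F : Set E} {C : PointedCone ℝ E}
    (hF : Convex ℝ F) (hF₀ : (0 : E) ∈ F) (hFC : F ⊆ C) :
    angleCone F C = (C : Set E) + (Submodule.span ℝ F : Set E) := by
  ext w
  constructor
  · rintro ⟨a, ha, x, hx, z, hz, rfl⟩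
    refine ⟨a • x, C.smul_mem ha.le hx, a • -z, Submodule.smul_mem _ a (Submodule.neg_mem _
      (Submodule.subset_span (intrinsicInterior_subset hz))), by module⟩
  · rintro ⟨x, hx, d, hd, rfl⟩
    obtain ⟨z, hz⟩ := Set.Nonempty.intrinsicInterior hF ⟨0, hF₀⟩
    have hdir : d ∈ (affineSpan ℝ F).direction := by
      refine Submodule.span_le.2 (fun f hf => ?_) hd
      simpa using AffineSubspace.vsub_mem_direction (subset_affineSpan ℝ F hf)
        (subset_affineSpan ℝ F hF₀)
    obtain ⟨ε, hε, hzd⟩ := exists_add_smul_mem_of_mem_intrinsicInterior hz hdir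
    refine ⟨ε⁻¹, inv_pos.2 hε, ε • x + (z + ε • d), C.add_mem (C.smul_mem hε.le hx) (hFC hzd),
      z, hz, ?_⟩
    show x + d = ε⁻¹ • (ε • x + (z + ε • d) - z)
    rw [add_sub_assoc, add_sub_cancel_left, ← smul_add, smul_smul, inv_mul_cancel₀ hε.ne',
      one_smul]

end InnerProductSpace

section IsFaceOf

variable {E : Type*} [NormedAddCommGroup E] [InnerProductSpace ℝ E] {C F G : Set E}

theorem IsPolyCone.exists_eq_dualCone (hC : IsPolyCone C) : ∃ s : Finset E, C = dualCone s := by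
  obtain ⟨s, rfl⟩ := hC
  exact ⟨s, by ext; simp [dualCone]⟩

theorem IsFaceOf.subset (hG : IsFaceOf G C) : G ⊆ C := by
  obtain ⟨y, -, rfl⟩ := hG
  exact Set.inter_subset_left

theorem IsFaceOf.mono (hF : IsFaceOf F C) (hFG : F ⊆ G) (hGC : G ⊆ C) : IsFaceOf F G := by
  obtain ⟨y, hCy, rfl⟩ := hF
  exact ⟨y, hGC.trans hCy, subset_antisymm (fun v hv => ⟨hFG hv, hv.2⟩)
    fun v hv => ⟨hGC hv.1, hv.2⟩⟩

theorem IsFaceOf.intrinsicInterior_nonempty [FiniteDimensional ℝ E] {S : Set E}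
    (hG : IsFaceOf G (dualCone S)) : (intrinsicInterior ℝ G).Nonempty := by
  obtain ⟨y, -, rfl⟩ := hG
  refine Set.Nonempty.intrinsicInterior ?_ ⟨0, by simp [dualCone]⟩
  rw [dualCone_eq_coe_dual]
  exact (PointedCone.convex _).inter (convex_hyperplane ((innerₗ E).flip y).isLinear 0)

theorem isFaceOf_dualCone_inter {S s : Finset E} (hS : S ⊆ s) :
    IsFaceOf (dualCone s ∩ {v | ∀ y ∈ S, ⟪v, y⟫ = 0}) (dualCone s) := by
  refine ⟨∑ y ∈ S, y, fun v hv => ?_, ?_⟩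
  · simpa [inner_sum] using Finset.sum_nonneg fun y hy => hv y (hS hy)
  · ext v
    simp only [Set.mem_inter_iff, Set.mem_ofPred_eq, inner_sum]
    exact and_congr_right fun hv =>
      (Finset.sum_eq_zero_iff_of_nonneg fun y hy => hv y (hS hy)).symm

theorem dualCone_union_neg {S T : Set E} (hST : S ⊆ T) :
    dualCone (T ∪ -S) = dualCone T ∩ {v | ∀ y ∈ S, ⟪v, y⟫ = 0} := by
  ext v
  simp only [dualCone, Set.mem_union, Set.mem_neg, Set.mem_inter_iff, Set.mem_ofPred_eq]
  constructor
  · intro h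
    refine ⟨fun c hc => h c (.inl hc), fun y hy => le_antisymm ?_ (h y (.inl (hST hy)))⟩
    simpa using h (-y) (.inr (by simpa))
  · rintro ⟨hT, hS⟩ c (hc | hc)
    · exact hT c hc
    · simpa using (hS _ hc).le

end IsFaceOf

def activeSet {E : Type*} [NormedAddCommGroup E] [InnerProductSpace ℝ E] (s : Finset E)
    (G : Set E) : Finset E :=
  s.filter fun y => ∀ v ∈ G, ⟪v, y⟫ = 0

section activeSet

variable {E : Type*} [NormedAddCommGroup E] [InnerProductSpace ℝ E] {s : Finset E} {F G : Set E}

theorem activeSet_subset : activeSet s G ⊆ s := Finset.filter_subset _ _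

theorem inner_eq_zero_of_mem_activeSet {v y : E} (hv : v ∈ G) (hy : y ∈ activeSet s G) :
    ⟪v, y⟫ = 0 :=
  (Finset.mem_filter.1 hy).2 v hv

theorem activeSet_anti (hFG : F ⊆ G) : activeSet s G ⊆ activeSet s F :=
  fun _ hy => Finset.mem_filter.2
    ⟨activeSet_subset hy, fun _ hv => inner_eq_zero_of_mem_activeSet (hFG hv) hy⟩

theorem IsFaceOf.activeSet_eq_filter (hG : IsFaceOf G (dualCone s)) {z : E}
    (hz : z ∈ intrinsicInterior ℝ G) : activeSet s G = s.filter fun y => ⟪z, y⟫ = 0 := by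
  refine Finset.filter_congr fun y hy => ⟨fun h => h z (intrinsicInterior_subset hz),
    fun h v hv => inner_eq_zero_of_mem_intrinsicInterior (fun v hv => hG.subset hv y hy) hz h hv⟩

theorem IsFaceOf.exists_add_smul_mem (hG : IsFaceOf G (dualCone s)) {z v : E}
    (hz : z ∈ intrinsicInterior ℝ G) (hv : v ∈ dualCone (activeSet s G)) :
    ∃ ε : ℝ, 0 < ε ∧ z + ε • v ∈ dualCone s := by
  have hnear : ∀ᶠ ε in 𝓝 (0 : ℝ), ∀ y ∈ s, ⟪z, y⟫ ≠ 0 → 0 < ⟪z + ε • v, y⟫ := by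
    refine (Filter.eventually_all_finset s).2 fun y hy => ?_
    by_cases hzy : ⟪z, y⟫ = 0
    · exact .of_forall fun _ h => absurd hzy h
    have hpos : 0 < ⟪z, y⟫ := (hG.subset (intrinsicInterior_subset hz) y hy).lt_of_ne' hzy
    have hcont : Continuous fun ε : ℝ => ⟪z + ε • v, y⟫ := by fun_prop
    filter_upwards [continuousAt_const.eventually_lt hcont.continuousAt (by simpa using hpos)]
      with ε hε _ using hε
  obtain ⟨ε, hεs, hε⟩ :=
    ((hnear.filter_mono nhdsWithin_le_nhds).and (self_mem_nhdsWithin (s := Set.Ioi 0))).exists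
  refine ⟨ε, hε, fun y hy => ?_⟩
  by_cases hzy : ⟪z, y⟫ = 0
  · have hya : y ∈ activeSet s G := hG.activeSet_eq_filter hz ▸ Finset.mem_filter.2 ⟨hy, hzy⟩
    rw [inner_add_left, hzy, zero_add, real_inner_smul_left]
    exact mul_nonneg hε.le (real_inner_comm y v ▸ hv y hya)
  · exact (hεs y hy hzy).le

theorem IsFaceOf.subset_dualCone_inter (hF : IsFaceOf F (dualCone s)) {T : Finset E}
    (hT : T ⊆ activeSet s F) : F ⊆ dualCone s ∩ {v | ∀ y ∈ T, ⟪v, y⟫ = 0} := fun _ hv =>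
  ⟨hF.subset hv, fun _ hy => inner_eq_zero_of_mem_activeSet hv (hT hy)⟩

variable [FiniteDimensional ℝ E]

theorem IsFaceOf.eq_inter_activeSet (hG : IsFaceOf G (dualCone s)) :
    G = dualCone s ∩ {v | ∀ y ∈ activeSet s G, ⟪v, y⟫ = 0} := by
  refine subset_antisymm (fun v hv => ⟨hG.subset hv, fun _ => inner_eq_zero_of_mem_activeSet hv⟩)
    fun v ⟨hvC, hvG⟩ => ?_
  obtain ⟨z, hz⟩ := hG.intrinsicInterior_nonempty
  obtain ⟨ε, hε, hzv⟩ := hG.exists_add_smul_mem hz (v := z - v) fun y hy => by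
    rw [inner_sub_left, inner_eq_zero_of_mem_activeSet (intrinsicInterior_subset hz) hy, hvG y hy,
      sub_zero]
  obtain ⟨w, hCw, rfl⟩ := hG
  have hzw : ⟪z, w⟫ = 0 := (intrinsicInterior_subset hz).2
  have := hCw hzv
  simp only [Set.mem_ofPred_eq, inner_add_left, real_inner_smul_left, inner_sub_left, hzw] at this
  exact ⟨hvC, le_antisymm (by nlinarith) (hCw hvC)⟩

theorem IsFaceOf.angleCone_eq (hG : IsFaceOf G (dualCone s)) :
    angleCone G (dualCone s) = dualCone (activeSet s G) := by
  refine subset_antisymm ?_ fun v hv => ?_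
  · rintro _ ⟨a, ha, x, hx, z, hz, rfl⟩ y hy
    rw [real_inner_smul_left, inner_sub_left,
      inner_eq_zero_of_mem_activeSet (intrinsicInterior_subset hz) hy, sub_zero]
    exact mul_nonneg ha.le (hx y (activeSet_subset hy))
  · obtain ⟨z, hz⟩ := hG.intrinsicInterior_nonempty
    obtain ⟨ε, hε, hzv⟩ := hG.exists_add_smul_mem hz hv
    refine ⟨ε⁻¹, inv_pos.2 hε, z + ε • v, hzv, z, hz, ?_⟩
    rw [add_sub_cancel_left, smul_smul, inv_mul_cancel₀ hε.ne', one_smul]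

theorem IsFaceOf.dualCone_angleCone (hG : IsFaceOf G (dualCone s)) :
    dualCone (angleCone G (dualCone s)) = PointedCone.hull ℝ (activeSet s G : Set E) := by
  rw [hG.angleCone_eq, dualCone_dualCone_finset]

theorem IsFaceOf.subset_iff_hull_activeSet_subset {G' : Set E} (hG : IsFaceOf G (dualCone s))
    (hG' : IsFaceOf G' (dualCone s)) :
    G ⊆ G' ↔ (PointedCone.hull ℝ (activeSet s G' : Set E) : Set E) ⊆
      PointedCone.hull ℝ (activeSet s G : Set E) := by
  refine ⟨fun h => Submodule.span_mono (Finset.coe_subset.2 (activeSet_anti h)), fun h v hv => ?_⟩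
  rw [hG'.eq_inter_activeSet]
  exact ⟨hG.subset hv, fun y hy => inner_eq_zero_of_mem_hull
    (fun _ => inner_eq_zero_of_mem_activeSet hv) (h (PointedCone.subset_hull hy))⟩

theorem IsFaceOf.isFaceOf_hull_activeSet (hG : IsFaceOf G (dualCone s)) (hFG : F ⊆ G) :
    IsFaceOf (PointedCone.hull ℝ (activeSet s G : Set E) : Set E)
      (PointedCone.hull ℝ (activeSet s F : Set E)) := by
  obtain ⟨z, hz⟩ := hG.intrinsicInterior_nonempty
  have hzF : ∀ y ∈ activeSet s F, 0 ≤ ⟪y, z⟫ := fun y hy =>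
    real_inner_comm z y ▸ hG.subset (intrinsicInterior_subset hz) y (activeSet_subset hy)
  have hGF := activeSet_anti (s := s) hFG
  have hfilter : (activeSet s F).filter (fun y => ⟪y, z⟫ = 0) = activeSet s G := by
    rw [hG.activeSet_eq_filter hz] at hGF ⊢
    ext y
    simp only [Finset.mem_filter, real_inner_comm z]
    exact ⟨fun ⟨hy, hyz⟩ => ⟨activeSet_subset hy, hyz⟩,
      fun ⟨hy, hyz⟩ => ⟨hGF (Finset.mem_filter.2 ⟨hy, real_inner_comm z y ▸ hyz⟩), hyz⟩⟩
  exact hfilter ▸ isFaceOf_hull_filter _ hzF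

theorem IsFaceOf.activeSet_dualCone_inter (hF : IsFaceOf F (dualCone s)) {w : E}
    (hw : w ∈ dualCone (activeSet s F)) :
    activeSet s (dualCone s ∩ {v | ∀ y ∈ (activeSet s F).filter (⟪·, w⟫ = 0), ⟪v, y⟫ = 0}) =
      (activeSet s F).filter (⟪·, w⟫ = 0) := by
  set T := (activeSet s F).filter (⟪·, w⟫ = 0)
  have hTF : T ⊆ activeSet s F := Finset.filter_subset _ _
  refine subset_antisymm (fun y hy => ?_) fun y hy => Finset.mem_filter.2
    ⟨activeSet_subset (hTF hy), fun v hv => hv.2 y hy⟩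
  have hyF := activeSet_anti (hF.subset_dualCone_inter hTF) hy
  refine Finset.mem_filter.2 ⟨hyF, ?_⟩
  obtain ⟨z, hz⟩ := hF.intrinsicInterior_nonempty
  obtain ⟨ε, hε, hzw⟩ := hF.exists_add_smul_mem hz hw
  have hzF : ∀ y ∈ activeSet s F, ⟪z, y⟫ = 0 := fun _ =>
    inner_eq_zero_of_mem_activeSet (intrinsicInterior_subset hz)
  have hmem : z + ε • w ∈ dualCone s ∩ {v | ∀ y ∈ T, ⟪v, y⟫ = 0} := ⟨hzw, fun y' hy' => by
    rw [inner_add_left, real_inner_smul_left, hzF y' (hTF hy'), real_inner_comm,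
      (Finset.mem_filter.1 hy').2, mul_zero, add_zero]⟩
  have hzy := inner_eq_zero_of_mem_activeSet hmem hy
  rw [inner_add_left, real_inner_smul_left, hzF y hyF, zero_add, real_inner_comm] at hzy
  exact (mul_eq_zero.1 hzy).resolve_left hε.ne'

theorem IsFaceOf.exists_hull_activeSet_eq (hF : IsFaceOf F (dualCone s)) {A : Set E}
    (hA : IsFaceOf A (PointedCone.hull ℝ (activeSet s F : Set E))) :
    ∃ G, IsFaceOf G (dualCone s) ∧ F ⊆ G ∧
      (PointedCone.hull ℝ (activeSet s G : Set E) : Set E) = A := by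
  obtain ⟨w, hw, rfl⟩ := hA
  have hwF : ∀ y ∈ activeSet s F, 0 ≤ ⟪y, w⟫ := fun y hy => hw (PointedCone.subset_hull hy)
  set T := (activeSet s F).filter (⟪·, w⟫ = 0)
  have hTF : T ⊆ activeSet s F := Finset.filter_subset _ _
  refine ⟨dualCone s ∩ {v | ∀ y ∈ T, ⟪v, y⟫ = 0},
    isFaceOf_dualCone_inter (hTF.trans activeSet_subset),
    hF.subset_dualCone_inter hTF, ?_⟩
  rw [hF.activeSet_dualCone_inter fun y hy => real_inner_comm y w ▸ hwF y hy,
    hull_inter_hyperplane _ hwF]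

theorem IsFaceOf.angleCone_hull_activeSet (hF : IsFaceOf F (dualCone s))
    (hG : IsFaceOf G (dualCone s)) (hFG : F ⊆ G) :
    angleCone (PointedCone.hull ℝ (activeSet s G : Set E))
        (PointedCone.hull ℝ (activeSet s F : Set E)) = dualCone (angleCone F G) := by
  have hGs : G = dualCone ↑(s ∪ -activeSet s G) := by
    rw [Finset.coe_union, Finset.coe_neg,
      dualCone_union_neg (Finset.coe_subset.2 activeSet_subset)]
    exact hG.eq_inter_activeSet
  have hF' : IsFaceOf F (dualCone ↑(s ∪ -activeSet s G)) := hGs ▸ hF.mono hFG hG.subset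
  have hact : activeSet (s ∪ -activeSet s G) F = activeSet s F ∪ -activeSet s G := by
    rw [activeSet, Finset.filter_union, Finset.filter_true_of_mem (s := -activeSet s G)]
    · rfl
    intro y hy v hv
    obtain ⟨x, hx, rfl⟩ := Finset.mem_neg.1 hy
    rw [inner_neg_right, inner_eq_zero_of_mem_activeSet (hFG hv) hx, neg_zero]
  have hST : activeSet s G ⊆ activeSet s F := activeSet_anti hFG
  rw [angleCone_eq_add_span (PointedCone.convex _) (zero_mem _)
      (Submodule.span_mono (Finset.coe_subset.2 hST)), Submodule.span_span_of_tower,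
    ← hull_union_neg hST, ← hact, ← hF'.dualCone_angleCone, ← hGs]

end activeSet

theorem stmt7 (C F : Set V) (hC : IsPolyCone C) (hF : IsFaceOf F C) :
    Set.BijOn (fun G : Set V => dualCone (angleCone G C))
        {G : Set V | IsFaceOf G C ∧ F ⊆ G}
        {A : Set V | IsFaceOf A (dualCone (angleCone F C))} ∧
    (∀ G G' : Set V, IsFaceOf G C → F ⊆ G → IsFaceOf G' C → F ⊆ G' →
        (G ⊆ G' ↔ dualCone (angleCone G' C) ⊆ dualCone (angleCone G C))) ∧
    (∀ G : Set V, IsFaceOf G C → F ⊆ G →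
        angleCone (dualCone (angleCone G C)) (dualCone (angleCone F C)) =
          dualCone (angleCone F G)) := by
  obtain ⟨s, rfl⟩ := hC.exists_eq_dualCone
  have hmono : ∀ G G' : Set V, IsFaceOf G (dualCone s) → IsFaceOf G' (dualCone s) →
      (G ⊆ G' ↔ dualCone (angleCone G' (dualCone s)) ⊆ dualCone (angleCone G (dualCone s))) :=
    fun G G' hG hG' => by
      rw [hG.dualCone_angleCone, hG'.dualCone_angleCone]
      exact hG.subset_iff_hull_activeSet_subset hG'
  refine ⟨⟨fun G ⟨hG, hFG⟩ => ?_, fun G ⟨hG, _⟩ G' ⟨hG', _⟩ h => ?_, fun A hA => ?_⟩,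
    fun G G' hG _ hG' _ => hmono G G' hG hG', fun G hG hFG => ?_⟩
  · show IsFaceOf (dualCone (angleCone G _)) (dualCone (angleCone F _))
    rw [hF.dualCone_angleCone, hG.dualCone_angleCone]
    exact hG.isFaceOf_hull_activeSet hFG
  · exact subset_antisymm ((hmono G G' hG hG').2 h.ge) ((hmono G' G hG' hG).2 h.le)
  · rw [Set.mem_ofPred_eq, hF.dualCone_angleCone] at hA
    obtain ⟨G, hG, hFG, rfl⟩ := hF.exists_hull_activeSet_eq hA
    exact ⟨G, ⟨hG, hFG⟩, hG.dualCone_angleCone⟩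
  · rw [hF.dualCone_angleCone, hG.dualCone_angleCone]
    exact hF.angleCone_hull_activeSet hG hFG
end
end

section
/- There exists a unique valuation D on the algebra of polyhedral cones (the ℝ-span of indicator functions of polyhedral cones in V) such that D([C]) = [C*] for every polyhedral cone C. -/
open scoped RealInnerProductSpace
open scoped Classical

noncomputable section

variable {V : Type*} [NormedAddCommGroup V] [InnerProductSpace ℝ V] [FiniteDimensional ℝ V]

/-!
The content is that `C ↦ [C*]` respects linear relations: `∑ aᵢ [Cᵢ] = 0` must force
`∑ aᵢ [Cᵢ*] = 0`. For a cone `C`, a point `y` lies in `C*` iff the polyhedron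
`C ∩ {x | ⟪x, y⟫ ≤ -1}` is empty, so `[C*](y) = 1 - χ(C ∩ {x | ⟪x, y⟫ ≤ -1})`, where the Euler
characteristic `χ` of a polyhedron is `1` if it is nonempty and `0` otherwise. It therefore
suffices that `χ` respects linear relations among indicators of polyhedra. This is proved by
induction on the dimension: slicing along the affine hyperplanes `t • u + uᗮ` reduces it to closed
intervals of the line, where `χ` can be read off from the upward jumps of the indicator function.
That `D` maps the span into itself is the Farkas–Weyl theorem: the dual of a polyhedral cone is
finitely generated, and finitely generated cones are polyhedral by Fourier–Motzkin elimination.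
-/

theorem LinearMap.existsUnique_span_of_ker_le {R M N ι : Type*} [Ring R] [AddCommGroup M]
    [Module R M] [AddCommGroup N] [Module R N] (f : ι → M) (g : ι → N) {S : Set M}
    (hf : ∀ i, f i ∈ S) (hS : ∀ x ∈ S, ∃ i, f i = x)
    (hker : LinearMap.ker (Finsupp.linearCombination R f) ≤
      LinearMap.ker (Finsupp.linearCombination R g)) :
    ∃! D : Submodule.span R S →ₗ[R] N, ∀ i, D ⟨f i, Submodule.subset_span (hf i)⟩ = g i := by
  obtain rfl : S = Set.range f :=
    Set.Subset.antisymm (fun x hx => hS x hx) (Set.range_subset_iff.2 hf)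
  set T := Finsupp.linearCombination R f
  have hT : Submodule.span R (Set.range f) = LinearMap.range T :=
    (Finsupp.range_linearCombination R).symm
  let D₀ : Submodule.span R (Set.range f) →ₗ[R] N :=
    T.ker.liftQ (Finsupp.linearCombination R g) hker ∘ₗ T.quotKerEquivRange.symm.toLinearMap ∘ₗ
      (LinearEquiv.ofEq _ _ hT).toLinearMap
  have hD₀ : ∀ i, D₀ ⟨f i, Submodule.subset_span (hf i)⟩ = g i := by
    intro i
    have hfi : LinearEquiv.ofEq _ _ hT ⟨f i, Submodule.subset_span (hf i)⟩ =
        ⟨T (Finsupp.single i 1), LinearMap.mem_range_self T _⟩ := Subtype.ext (by simp [T])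
    simp only [D₀, LinearMap.comp_apply, LinearEquiv.coe_coe]
    rw [hfi, LinearMap.quotKerEquivRange_symm_apply_image, Submodule.mkQ_apply,
      Submodule.liftQ_apply, Finsupp.linearCombination_single, one_smul]
  refine ⟨D₀, hD₀, fun D hD => LinearMap.ext_on Submodule.span_span_coe_preimage ?_⟩
  rintro ⟨_, hx⟩ ⟨i, rfl⟩
  exact (hD i).trans (hD₀ i).symm

variable {E F : Type*} [NormedAddCommGroup E] [InnerProductSpace ℝ E]
  [NormedAddCommGroup F] [InnerProductSpace ℝ F]

lemma ind_apply {α : Type*} (S : Set α) (x : α) : ind S x = if x ∈ S then 1 else 0 := by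
  simp [ind, Set.indicator_apply]

theorem exists_forall_le_forall_le {α : Type*} [LinearOrder α] [Nonempty α] (L U : Finset α)
    (h : ∀ l ∈ L, ∀ u ∈ U, l ≤ u) : ∃ t, (∀ l ∈ L, l ≤ t) ∧ ∀ u ∈ U, t ≤ u := by
  rcases L.eq_empty_or_nonempty with rfl | hL
  · rcases U.eq_empty_or_nonempty with rfl | hU
    · exact ⟨Classical.arbitrary α, by simp, by simp⟩
    · exact ⟨U.min' hU, by simp, fun u hu => U.min'_le u hu⟩
  · exact ⟨L.max' hL, fun l hl => L.le_max' l hl,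
      fun u hu => L.max'_le hL _ fun l hl => h l hl u hu⟩

/-- Fourier–Motzkin elimination of `s`: `q = (a, b, c)` stands for the constraint
`c ≤ ⟪x, a⟫ + s * b`, and `s` exists iff every lower bound on it (from `b > 0`) is at most every
upper bound (from `b < 0`), a condition linear in `x` for each such pair. -/
theorem isPolyhedron_setOf_exists_forall_le (T : Finset (E × ℝ × ℝ)) :
    IsPolyhedron {x : E | ∃ s : ℝ, ∀ q ∈ T, q.2.2 ≤ ⟪x, q.1⟫ + s * q.2.1} := by
  refine ⟨(T.filter fun q => q.2.1 = 0).image (fun q => (q.1, q.2.2)) ∪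
    ((T ×ˢ T).filter fun pq => 0 < pq.1.2.1 ∧ pq.2.2.1 < 0).image
      (fun pq => (pq.1.2.1 • pq.2.1 - pq.2.2.1 • pq.1.1,
        pq.1.2.1 * pq.2.2.2 - pq.2.2.1 * pq.1.2.2)), ?_⟩
  ext x
  simp only [Set.mem_ofPred_eq, Set.mem_iInter, Finset.mem_union, Finset.mem_image,
    Finset.mem_filter, Finset.mem_product]
  constructor
  · rintro ⟨s, hs⟩ _ (⟨q, ⟨hq, hq0⟩, rfl⟩ | ⟨⟨p, q⟩, ⟨⟨hp, hq⟩, hp0, hq0⟩, rfl⟩)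
    · simpa [hq0] using hs q hq
    · have h1 := hs p hp
      have h2 := hs q hq
      simp only [inner_sub_right, real_inner_smul_right]
      nlinarith
  · intro h
    obtain ⟨s, hL, hU⟩ := exists_forall_le_forall_le
      ((T.filter fun q => 0 < q.2.1).image fun q => (q.2.2 - ⟪x, q.1⟫) / q.2.1)
      ((T.filter fun q => q.2.1 < 0).image fun q => (q.2.2 - ⟪x, q.1⟫) / q.2.1) (by
        simp only [Finset.mem_image, Finset.mem_filter]
        rintro _ ⟨p, ⟨hp, hp0⟩, rfl⟩ _ ⟨q, ⟨hq, hq0⟩, rfl⟩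
        have := h _ (Or.inr ⟨(p, q), ⟨⟨hp, hq⟩, hp0, hq0⟩, rfl⟩)
        simp only [inner_sub_right, real_inner_smul_right] at this
        rw [div_le_iff₀ hp0, div_mul_eq_mul_div, le_div_iff_of_neg hq0]
        nlinarith)
    refine ⟨s, fun q hq => ?_⟩
    rcases lt_trichotomy q.2.1 0 with hq0 | hq0 | hq0
    · have := hU _ (Finset.mem_image_of_mem _ (Finset.mem_filter.2 ⟨hq, hq0⟩))
      rw [le_div_iff_of_neg hq0] at this
      linarith
    · simpa [hq0] using h _ (Or.inl ⟨q, ⟨hq, hq0⟩, rfl⟩)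
    · have := hL _ (Finset.mem_image_of_mem _ (Finset.mem_filter.2 ⟨hq, hq0⟩))
      rw [div_le_iff₀ hq0] at this
      linarith

theorem IsPolyhedron.setOf_exists_add_smul {P : Set E} (hP : IsPolyhedron P) (w : E) :
    IsPolyhedron {x | ∃ s : ℝ, x + s • w ∈ P} := by
  obtain ⟨S, rfl⟩ := hP
  convert isPolyhedron_setOf_exists_forall_le (S.image fun p => (p.1, ⟪w, p.1⟫, p.2)) using 1
  ext x
  simp only [Set.mem_ofPred_eq, Set.mem_iInter, Finset.forall_mem_image, inner_add_left,
    real_inner_smul_left]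

theorem IsPolyhedron.setOf_exists_nonneg_add_smul {P : Set E} (hP : IsPolyhedron P) (w : E) :
    IsPolyhedron {x | ∃ s : ℝ, 0 ≤ s ∧ x + s • w ∈ P} := by
  obtain ⟨S, rfl⟩ := hP
  convert isPolyhedron_setOf_exists_forall_le
    (insert (0, 1, 0) (S.image fun p => (p.1, ⟪w, p.1⟫, p.2))) using 1
  ext x
  simp only [Set.mem_ofPred_eq, Set.mem_iInter, Finset.forall_mem_image, Finset.forall_mem_insert,
    inner_add_left, real_inner_smul_left, inner_zero_right, zero_add, mul_one]

theorem IsPolyhedron.setOf_exists_add_mem {P : Set E} (hP : IsPolyhedron P) {K : Submodule ℝ E}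
    (hK : K.FG) : IsPolyhedron {x | ∃ k ∈ K, x + k ∈ P} := by
  obtain ⟨t, rfl⟩ := hK
  induction t using Finset.induction_on with
  | empty => simpa using hP
  | insert w t _ ih =>
    convert ih.setOf_exists_add_smul w using 1
    ext x
    simp only [Finset.coe_insert, Submodule.mem_span_insert, Set.mem_ofPred_eq]
    constructor
    · rintro ⟨_, ⟨s, k, hk, rfl⟩, hx⟩
      exact ⟨s, k, hk, by convert hx using 1; abel⟩
    · rintro ⟨s, k, hk, hx⟩
      exact ⟨s • w + k, ⟨s, k, hk, rfl⟩, by rwa [← add_assoc]⟩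

theorem IsPolyhedron.preimage [FiniteDimensional ℝ E] [FiniteDimensional ℝ F] {P : Set E}
    (hP : IsPolyhedron P) (f : F →ₗ[ℝ] E) (c : E) : IsPolyhedron ((fun x => f x + c) ⁻¹' P) := by
  obtain ⟨S, rfl⟩ := hP
  refine ⟨S.image fun p => (LinearMap.adjoint f p.1, p.2 - ⟪c, p.1⟫), ?_⟩
  ext x
  simp only [Set.mem_preimage, Set.mem_iInter, Set.mem_ofPred_eq, Finset.mem_image,
    forall_exists_index, and_imp, forall_apply_eq_imp_iff₂, LinearMap.adjoint_inner_right,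
    inner_add_left, sub_le_iff_le_add]

theorem IsPolyhedron.inter {P Q : Set E} (hP : IsPolyhedron P) (hQ : IsPolyhedron Q) :
    IsPolyhedron (P ∩ Q) := by
  obtain ⟨S, rfl⟩ := hP
  obtain ⟨T, rfl⟩ := hQ
  exact ⟨S ∪ T, by ext; simp [or_imp, forall_and]⟩

theorem IsPolyhedron.isClosed {P : Set E} (hP : IsPolyhedron P) : IsClosed P := by
  obtain ⟨S, rfl⟩ := hP
  exact isClosed_biInter fun p _ => isClosed_le continuous_const (by fun_prop)

theorem IsPolyhedron.convex {P : Set E} (hP : IsPolyhedron P) : Convex ℝ P := by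
  obtain ⟨S, rfl⟩ := hP
  exact convex_iInter₂ fun p _ => convex_halfSpace_ge ((innerₗ E).flip p.1).isLinear p.2

theorem IsPolyCone.isPolyhedron {C : Set E} (hC : IsPolyCone C) : IsPolyhedron C := by
  obtain ⟨S, rfl⟩ := hC
  exact ⟨S.image fun y => (y, 0), by ext; simp⟩

theorem IsPolyCone.zero_mem {C : Set E} (hC : IsPolyCone C) : (0 : E) ∈ C := by
  obtain ⟨S, rfl⟩ := hC
  simp

theorem IsPolyCone.smul_mem {C : Set E} (hC : IsPolyCone C) {c : ℝ} (hc : 0 ≤ c) {x : E}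
    (hx : x ∈ C) : c • x ∈ C := by
  obtain ⟨S, rfl⟩ := hC
  simp only [Set.mem_iInter, Set.mem_ofPred_eq, real_inner_smul_left] at hx ⊢
  exact fun y hy => mul_nonneg hc (hx y hy)

theorem IsPolyhedron.isPolyCone {P : Set E} (hP : IsPolyhedron P) (h0 : (0 : E) ∈ P)
    (hsmul : ∀ x ∈ P, ∀ c : ℝ, 0 ≤ c → c • x ∈ P) : IsPolyCone P := by
  obtain ⟨S, rfl⟩ := hP
  have hS : ∀ p ∈ S, p.2 ≤ 0 := by simpa using h0
  refine ⟨S.image Prod.fst, ?_⟩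
  ext x
  simp only [Set.mem_iInter, Set.mem_ofPred_eq, Finset.mem_image, forall_exists_index, and_imp,
    forall_apply_eq_imp_iff₂]
  refine ⟨fun hx p hp => ?_, fun hx p hp => (hS p hp).trans (hx p hp)⟩
  by_contra! hneg
  -- scale `x` so that the constraint `p` is violated by one
  have hc : 0 ≤ (p.2 - 1) / ⟪x, p.1⟫ := div_nonneg_of_nonpos (by linarith [hS p hp]) hneg.le
  have := Set.mem_iInter₂.1 (hsmul x (Set.mem_iInter₂.2 hx) _ hc) p hp
  rw [Set.mem_ofPred_eq, real_inner_smul_left, div_mul_cancel₀ _ hneg.ne] at this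
  linarith

theorem isPolyCone_singleton_zero [FiniteDimensional ℝ E] : IsPolyCone ({0} : Set E) := by
  let b := Module.finBasis ℝ E
  refine ⟨Finset.univ.image b ∪ Finset.univ.image (-b ·), ?_⟩
  ext v
  simp only [Set.mem_singleton_iff, Set.mem_iInter, Finset.mem_union, Finset.mem_image,
    Finset.mem_univ, true_and, Set.mem_ofPred_eq]
  refine ⟨by rintro rfl; simp, fun h => ?_⟩
  have hb : innerₗ E v = 0 := b.ext fun i => le_antisymm
    (by simpa [real_inner_comm] using h _ (Or.inr ⟨i, rfl⟩)) (h _ (Or.inl ⟨i, rfl⟩))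
  simpa using LinearMap.congr_fun hb v

theorem isPolyCone_hull [FiniteDimensional ℝ E] (t : Finset E) :
    IsPolyCone (PointedCone.hull ℝ (t : Set E) : Set E) := by
  induction t using Finset.induction_on with
  | empty => simpa using isPolyCone_singleton_zero
  | insert a t _ ih =>
    refine IsPolyhedron.isPolyCone ?_ (zero_mem _) fun x hx c hc => PointedCone.smul_mem _ hc hx
    convert ih.isPolyhedron.setOf_exists_nonneg_add_smul (-a) using 1
    ext x
    simp only [Finset.coe_insert, SetLike.mem_coe, Submodule.mem_span_insert, Set.mem_ofPred_eq]
    constructor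
    · rintro ⟨c, z, hz, rfl⟩
      exact ⟨c, c.2, by simpa [Nonneg.mk_smul] using hz⟩
    · rintro ⟨c, hc, hz⟩
      exact ⟨⟨c, hc⟩, _, hz, by simp [Nonneg.mk_smul]⟩

theorem dualCone_eq_hull [FiniteDimensional ℝ E] (s : Finset E) :
    dualCone (⋂ y ∈ s, {v : E | 0 ≤ ⟪v, y⟫}) = PointedCone.hull ℝ (s : Set E) := by
  refine Set.Subset.antisymm (fun z hz => ?_) fun x hx c hc => ?_
  · obtain ⟨S, hS⟩ := isPolyCone_hull s
    rw [hS]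
    refine Set.mem_iInter₂.2 fun w hw => ?_
    have hwC : w ∈ ⋂ y ∈ s, {v : E | 0 ≤ ⟪v, y⟫} := Set.mem_iInter₂.2 fun y hy => by
      have hy' := hS ▸ PointedCone.subset_hull (R := ℝ) (Finset.mem_coe.2 hy)
      simpa [real_inner_comm] using Set.mem_iInter₂.1 hy' w hw
    simpa [real_inner_comm] using hz w hwC
  · have hc : ∀ y ∈ s, 0 ≤ ⟪c, y⟫ := by simpa using hc
    induction hx using Submodule.span_induction with
    | mem y hy => simpa [real_inner_comm] using hc y hy
    | zero => simp
    | add y z _ _ hy hz => rw [inner_add_left]; exact add_nonneg hy hz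
    | smul r y _ hy =>
      change 0 ≤ ⟪(r : ℝ) • y, c⟫
      rw [real_inner_smul_left]
      exact mul_nonneg r.2 hy

theorem IsPolyCone.dualCone [FiniteDimensional ℝ E] {C : Set E} (hC : IsPolyCone C) :
    IsPolyCone (dualCone C) := by
  obtain ⟨s, rfl⟩ := hC
  rw [dualCone_eq_hull]
  exact isPolyCone_hull s

/-- The Euler characteristic of a nonempty closed convex set is `1`; only such sets occur below. -/
def eulerChar {α : Type*} (S : Set α) : ℝ := if S.Nonempty then 1 else 0

theorem eulerChar_eq_ind_of_subsingleton {α : Type*} [Subsingleton α] (S : Set α) (x : α) :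
    eulerChar S = ind S x := by
  have : Nonempty α := ⟨x⟩
  simp [eulerChar, ind_apply, Set.nonempty_iff_ne_empty, Set.eq_empty_iff_forall_notMem,
    Subsingleton.elim _ x]

section Line

variable {J : Set ℝ}

theorem ind_sub_ind_eq_ite_isLeast (hcl : IsClosed J) (hJ : J.OrdConnected) {p b : ℝ}
    (hpb : p < b) (hinf : sInf J ∉ Set.Ico p b) (hsup : sSup J ∉ Set.Ico p b) :
    ind J b - ind J p = if IsLeast J b then 1 else 0 := by
  by_cases hb : b ∈ J <;> by_cases hp : p ∈ J
  · have : ¬IsLeast J b := fun h => (h.2 hp).not_gt hpb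
    simp [ind_apply, hb, hp, this]
  · have hlow : p ∈ lowerBounds J := fun x hx =>
      le_of_not_ge fun hxp => hp (hJ.out hx hb ⟨hxp, hpb.le⟩)
    have hmin := hcl.isLeast_csInf ⟨b, hb⟩ ⟨p, hlow⟩
    have : sInf J = b := le_antisymm (csInf_le ⟨p, hlow⟩ hb)
      (not_lt.1 fun h => hinf ⟨hlow hmin.1, h⟩)
    rw [this] at hmin
    simp [ind_apply, hb, hp, hmin]
  · have hup : b ∈ upperBounds J := fun x hx =>
      le_of_not_ge fun hbx => hb (hJ.out hp hx ⟨hpb.le, hbx⟩)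
    have hmax := hcl.isGreatest_csSup ⟨p, hp⟩ ⟨b, hup⟩
    exact absurd ⟨hmax.2 hp, lt_of_le_of_ne (hup hmax.1) fun h => hb (h ▸ hmax.1)⟩ hsup
  · have : ¬IsLeast J b := fun h => hb h.1
    simp [ind_apply, hb, hp, this]

theorem ind_eq_ite_of_lt (hcl : IsClosed J) (hJ : J.OrdConnected) {t : ℝ} (hinf : t < sInf J)
    (hsup : t < sSup J) : ind J t = if J.Nonempty ∧ ¬BddBelow J then 1 else 0 := by
  by_cases ht : t ∈ J
  · have : J.Nonempty ∧ ¬BddBelow J := ⟨⟨t, ht⟩, fun h => (csInf_le h ht).not_gt hinf⟩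
    simp [ind_apply, ht, this]
  · rw [ind_apply, if_neg ht, if_neg]
    rintro ⟨hne, hbdd⟩
    obtain ⟨y, hy, hyt⟩ := not_bddBelow_iff.1 hbdd t
    obtain ⟨z, hz, htz⟩ : ∃ z ∈ J, t ≤ z := by
      by_cases hbdd' : BddAbove J
      · exact ⟨sSup J, hcl.csSup_mem hne hbdd', hsup.le⟩
      · obtain ⟨z, hz, h⟩ := not_bddAbove_iff.1 hbdd' t
        exact ⟨z, hz, h.le⟩
    exact ht (hJ.out hy hz ⟨hyt.le, htz⟩)

/-- `ind J t` detects that `J` is unbounded below; otherwise the sum picks up the unique upward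
jump of `ind J`, at `sInf J`. -/
theorem eulerChar_eq_ind_add_sum (hcl : IsClosed J) (hJ : J.OrdConnected) {E : Finset ℝ}
    (hinf : sInf J ∈ E) (hsup : sSup J ∈ E) {t : ℝ} (ht : ∀ e ∈ E, t < e) {p : ℝ → ℝ}
    (hp : ∀ b, p b < b) (hgap : ∀ b, ∀ e ∈ E, e ∉ Set.Ico (p b) b) :
    eulerChar J = ind J t + ∑ b ∈ E, (ind J b - ind J (p b)) := by
  have hleast : ∀ b, IsLeast J b ↔ (J.Nonempty ∧ BddBelow J) ∧ sInf J = b := fun b =>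
    ⟨fun h => ⟨⟨⟨b, h.1⟩, ⟨b, h.2⟩⟩, h.csInf_eq⟩,
      fun ⟨⟨hne, hbdd⟩, h⟩ => h ▸ hcl.isLeast_csInf hne hbdd⟩
  rw [ind_eq_ite_of_lt hcl hJ (ht _ hinf) (ht _ hsup),
    Finset.sum_congr rfl fun b _ => ind_sub_ind_eq_ite_isLeast hcl hJ (hp b)
      (hgap b _ hinf) (hgap b _ hsup)]
  simp only [hleast, ite_and, eulerChar]
  by_cases hne : J.Nonempty <;> by_cases hbdd : BddBelow J <;> simp [hne, hbdd, hinf]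

theorem exists_Ico_disjoint (E : Finset ℝ) (b : ℝ) : ∃ p < b, ∀ e ∈ E, e ∉ Set.Ico p b := by
  obtain ⟨l, hl, hsub⟩ := exists_Ioc_subset_of_mem_nhds
    ((E.erase b).finite_toSet.isClosed.isOpen_compl.mem_nhds
      (show b ∈ ((E.erase b : Set ℝ))ᶜ by simp)) ⟨b - 1, by linarith⟩
  refine ⟨(l + b) / 2, by linarith, fun e he hmem => ?_⟩
  have := hsub ⟨by linarith [hmem.1], hmem.2.le⟩
  simp [he, hmem.2.ne] at this

theorem sum_mul_eulerChar_eq_zero_of_real {ι : Type*} (s : Finset ι) (J : ι → Set ℝ)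
    (hcl : ∀ i ∈ s, IsClosed (J i)) (hJ : ∀ i ∈ s, (J i).OrdConnected) (a : ι → ℝ)
    (h : ∀ t, ∑ i ∈ s, a i * ind (J i) t = 0) : ∑ i ∈ s, a i * eulerChar (J i) = 0 := by
  let E := s.image (fun i => sInf (J i)) ∪ s.image (fun i => sSup (J i))
  obtain ⟨m, hm⟩ := E.bddBelow
  choose p hp hgap using exists_Ico_disjoint E
  have hχ : ∀ i ∈ s,
      eulerChar (J i) = ind (J i) (m - 1) + ∑ b ∈ E, (ind (J i) b - ind (J i) (p b)) :=
    fun i hi => eulerChar_eq_ind_add_sum (E := E) (hcl i hi) (hJ i hi)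
      (Finset.mem_union_left _ (Finset.mem_image_of_mem (fun i => sInf (J i)) hi))
      (Finset.mem_union_right _ (Finset.mem_image_of_mem (fun i => sSup (J i)) hi))
      (fun e he => by linarith [hm he]) hp hgap
  calc ∑ i ∈ s, a i * eulerChar (J i)
      = ∑ i ∈ s, (a i * ind (J i) (m - 1) +
          ∑ b ∈ E, (a i * ind (J i) b - a i * ind (J i) (p b))) :=
        Finset.sum_congr rfl fun i hi => by simp only [hχ i hi, mul_add, Finset.mul_sum, mul_sub]
    _ = ∑ i ∈ s, a i * ind (J i) (m - 1) +
          ∑ b ∈ E, (∑ i ∈ s, a i * ind (J i) b - ∑ i ∈ s, a i * ind (J i) (p b)) := by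
        simp only [Finset.sum_add_distrib, Finset.sum_sub_distrib]
        rw [Finset.sum_comm (s := s), Finset.sum_comm (s := s)]
    _ = 0 := by simp [h]

end Line

theorem sum_mul_eulerChar_eq_zero [FiniteDimensional ℝ E] {ι : Type*} (s : Finset ι)
    (P : ι → Set E) (hP : ∀ i ∈ s, IsPolyhedron (P i)) (a : ι → ℝ)
    (h : ∀ x, ∑ i ∈ s, a i * ind (P i) x = 0) : ∑ i ∈ s, a i * eulerChar (P i) = 0 := by
  induction hn : Module.finrank ℝ E generalizing E with
  | zero =>
    have : Subsingleton E := Module.finrank_zero_iff.mp hn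
    rw [Finset.sum_congr rfl fun i _ => by rw [eulerChar_eq_ind_of_subsingleton (P i) 0]]
    exact h 0
  | succ n ih =>
    have : Nontrivial E := Module.nontrivial_of_finrank_eq_succ hn
    obtain ⟨u, hu⟩ := exists_ne (0 : E)
    let K := (ℝ ∙ u)ᗮ
    have hK : Module.finrank ℝ K = n :=
      Submodule.finrank_add_finrank_orthogonal' (by rw [finrank_span_singleton hu, hn, add_comm])
    -- `J i` records the heights `t` at which the slice `P i ∩ (t • u + K)` is nonempty
    let J : ι → Set ℝ := fun i => {t | ∃ k ∈ K, t • u + k ∈ P i}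
    have hJ : ∀ i ∈ s, IsPolyhedron (J i) := fun i hi => by
      simpa [J] using ((hP i hi).setOf_exists_add_mem (IsNoetherian.noetherian K)).preimage
        (LinearMap.toSpanSingleton ℝ E u) 0
    have hslice : ∀ t, ∑ i ∈ s, a i * ind (J i) t = 0 := fun t => by
      have := ih (E := K) (fun i => (fun v : K => K.subtype v + t • u) ⁻¹' P i)
        (fun i hi => (hP i hi).preimage K.subtype (t • u)) (fun v => h _) hK
      convert this using 3 with i
      simp [eulerChar, ind_apply, J, Set.Nonempty, add_comm]
    convert sum_mul_eulerChar_eq_zero_of_real s J (fun i hi => (hJ i hi).isClosed)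
      (fun i hi => (hJ i hi).convex.ordConnected) a hslice using 3 with i
    simp only [eulerChar, J]
    congr 1
    refine propext ⟨fun ⟨x, hx⟩ => ?_, fun ⟨t, k, _, hk⟩ => ⟨_, hk⟩⟩
    obtain ⟨y, hy, k, hk, rfl⟩ := (ℝ ∙ u).exists_add_mem_mem_orthogonal x
    obtain ⟨t, rfl⟩ := Submodule.mem_span_singleton.1 hy
    exact ⟨t, k, hk, hx⟩

theorem ind_dualCone_eq {C : Set E} (hC : ∀ x ∈ C, ∀ c : ℝ, 0 < c → c • x ∈ C) (y : E) :
    ind (dualCone C) y = 1 - eulerChar (C ∩ {x | 1 ≤ ⟪x, -y⟫}) := by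
  by_cases hy : y ∈ dualCone C
  · have : ¬(C ∩ {x | 1 ≤ ⟪x, -y⟫}).Nonempty := fun ⟨x, hxC, hx⟩ => by
      have := hy x hxC
      rw [Set.mem_ofPred_eq, inner_neg_right, real_inner_comm] at hx
      linarith
    rw [ind_apply, eulerChar, if_pos hy, if_neg this, sub_zero]
  · obtain ⟨x, hxC, hyx⟩ : ∃ x ∈ C, ⟪y, x⟫ < 0 := by simpa [dualCone] using hy
    have : (C ∩ {x | 1 ≤ ⟪x, -y⟫}).Nonempty := by
      refine ⟨(-⟪y, x⟫)⁻¹ • x, hC x hxC _ (inv_pos.2 (neg_pos.2 hyx)), ?_⟩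
      rw [Set.mem_ofPred_eq, real_inner_smul_left, inner_neg_right, real_inner_comm y x,
        inv_mul_cancel₀ (neg_ne_zero.2 hyx.ne)]
    rw [ind_apply, eulerChar, if_neg hy, if_pos this, sub_self]

theorem sum_smul_ind_dualCone_eq_zero [FiniteDimensional ℝ E] {ι : Type*} (s : Finset ι)
    (C : ι → Set E) (hC : ∀ i ∈ s, IsPolyCone (C i)) (a : ι → ℝ)
    (h : ∑ i ∈ s, a i • ind (C i) = 0) : ∑ i ∈ s, a i • ind (dualCone (C i)) = 0 := by
  have h' : ∀ x, ∑ i ∈ s, a i * ind (C i) x = 0 := fun x => by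
    simpa using congrFun h x
  funext y
  let A : Set E := {x | 1 ≤ ⟪x, -y⟫}
  have hA : IsPolyhedron A := ⟨{(-y, 1)}, by simp [A]⟩
  have hrel : ∀ x, ∑ i ∈ s, a i * ind (C i ∩ A) x = 0 := fun x => by
    simpa [ind, Set.inter_indicator_one, ← mul_assoc, ← Finset.sum_mul] using
      congrArg (· * ind A x) (h' x)
  have hχ : ∑ i ∈ s, a i * eulerChar (C i ∩ A) = 0 :=
    sum_mul_eulerChar_eq_zero s _ (fun i hi => (hC i hi).isPolyhedron.inter hA) a hrel
  have hsum : ∑ i ∈ s, a i = 0 := by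
    rw [← h' 0]
    exact Finset.sum_congr rfl fun i hi => by rw [ind_apply, if_pos (hC i hi).zero_mem, mul_one]
  simp only [Finset.sum_apply, Pi.smul_apply, smul_eq_mul, Pi.zero_apply]
  rw [Finset.sum_congr rfl fun i hi => by rw [ind_dualCone_eq (fun x hx c hc =>
    (hC i hi).smul_mem hc.le hx)]]
  simp only [mul_sub, mul_one, Finset.sum_sub_distrib, hsum, zero_sub, neg_eq_zero]
  exact hχ

theorem stmt8 :
    ∃! D : (Submodule.span ℝ {f : V → ℝ | ∃ C : Set V, IsPolyCone C ∧ f = ind C}) →ₗ[ℝ] (Submodule.span ℝ {f : V → ℝ | ∃ C : Set V, IsPolyCone C ∧ f = ind C}),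
      ∀ (C : Set V) (hC : IsPolyCone C),
        ((D ⟨ind C, Submodule.subset_span ⟨C, hC, rfl⟩⟩ : Submodule.span ℝ {f : V → ℝ | ∃ C : Set V, IsPolyCone C ∧ f = ind C}) : V → ℝ) =
          ind (dualCone C) := by
  let S := {f : V → ℝ | ∃ C : Set V, IsPolyCone C ∧ f = ind C}
  let gen : {C : Set V // IsPolyCone C} → V → ℝ := fun C => ind C.1
  let dual : {C : Set V // IsPolyCone C} → Submodule.span ℝ S := fun C =>
    ⟨ind (dualCone C.1), Submodule.subset_span ⟨_, C.2.dualCone, rfl⟩⟩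
  have hker : LinearMap.ker (Finsupp.linearCombination ℝ gen) ≤
      LinearMap.ker (Finsupp.linearCombination ℝ dual) := fun c hc => by
    rw [LinearMap.mem_ker, Finsupp.linearCombination_apply, Finsupp.sum] at hc ⊢
    exact Subtype.ext (by simpa [dual] using
      sum_smul_ind_dualCone_eq_zero c.support (fun C => C.1) (fun C _ => C.2) c hc)
  obtain ⟨D, hD, huniq⟩ := LinearMap.existsUnique_span_of_ker_le (S := S) gen dual
    (fun C => ⟨C.1, C.2, rfl⟩) (fun _ ⟨C, hC, hf⟩ => ⟨⟨C, hC⟩, hf.symm⟩) hker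
  exact ⟨D, fun C hC => congrArg Subtype.val (hD ⟨C, hC⟩),
    fun D' hD' => huniq D' fun C => Subtype.ext (hD' C.1 C.2)⟩
end
end
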